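/- arXiv:1809.01224 — 10 statements merged into one kernel-verified Lean document; each statement's English description precedes it below -/
import Mathlib

section
/- Let D ≥ 2. Let k be the real Lie algebra with basis {J_{ab} = −J_{ba} (1 ≤ a < b ≤ D), B_a, P_a (1 ≤ a ≤ D), H} and nonzero brackets [J_{ab},J_{cd}] = δ_{bc}J_{ad} − δ_{ac}J_{bd} − δ_{bd}J_{ac} + δ_{ad}J_{bc}, [J_{ab},B_c] = δ_{bc}B_a − δ_{ac}B_b, [J_{ab},P_c] = δ_{bc}P_a − δ_{ac}P_b, [H,B_a] = B_a, [H,P_a] = −P_a, [B_a,P_b] = δ_{ab}H + J_{ab}, and let h ⊆ k be the subalgebra spanned by {J_{ab}, B_a}. Then the Lie pair (k,h) is not reductive: there is no linear subspace m ⊆ k with k = h ⊕ m (as vector spaces) and [h,m] ⊆ m. -/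
/-!
Write `H = X + Y` with `X ∈ h` and `Y ∈ m`. Bracketing with `B_a` gives
`-B_a = ⁅B_a, X⁆ + ⁅B_a, Y⁆`, where `⁅B_a, X⁆ ∈ h` and `⁅B_a, Y⁆ ∈ m`; hence `⁅B_a, Y⁆ ∈ h ∩ m = 0`
and `B_a = -⁅B_a, X⁆`. But `ad B_a` maps `h` into the span of the `B_c` with `c ≠ a`, which does
not contain `B_a` by linear independence.
-/

namespace Stmt3

/-- Kronecker delta. -/
def kron {n : ℕ} (a b : Fin n) : ℝ := if a = b then 1 else 0

/-- The family `{J_{ab} (a < b), B_a, P_a, H}`, indexing a basis of a kinematical Lie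
algebra. -/
def kinFam {L : Type*} {D : ℕ} (J : Fin D → Fin D → L) (B P : Fin D → L) (H : L) :
    ({p : Fin D × Fin D // p.1 < p.2} ⊕ (Fin D ⊕ (Fin D ⊕ Unit))) → L :=
  Sum.elim (fun p => J p.1.1 p.1.2) (Sum.elim B (Sum.elim P fun _ => H))

/-- The subalgebra `h` spanned by the `J_{ab}` and the `B_a`. -/
def hSpan {L : Type*} [AddCommGroup L] [Module ℝ L] {D : ℕ}
    (J : Fin D → Fin D → L) (B : Fin D → L) : Submodule ℝ L :=
  Submodule.span ℝ ((Set.range fun p : Fin D × Fin D => J p.1 p.2) ∪ Set.range B)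

section Reductive

variable {R L : Type*} [CommRing R] [LieRing L] [LieAlgebra R L]

theorem exists_mem_lie_eq_of_isCompl {h m : Submodule R L} (hc : IsCompl h m)
    (hm : ∀ x ∈ h, ∀ y ∈ m, ⁅x, y⁆ ∈ m) {x z : L} (hx : x ∈ h)
    (hxh : ∀ X ∈ h, ⁅x, X⁆ ∈ h) (hxz : ⁅x, z⁆ ∈ h) : ∃ X ∈ h, ⁅x, z⁆ = ⁅x, X⁆ := by
  obtain ⟨X, hX, Y, hY, rfl⟩ : ∃ X ∈ h, ∃ Y ∈ m, X + Y = z :=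
    Submodule.mem_sup.mp (hc.sup_eq_top ▸ Submodule.mem_top)
  have hYh : ⁅x, Y⁆ ∈ h := by
    simpa only [lie_add, add_sub_cancel_left] using h.sub_mem hxz (hxh X hX)
  have hY0 : ⁅x, Y⁆ = 0 := Submodule.disjoint_def.mp hc.disjoint _ hYh (hm x hx Y hY)
  exact ⟨X, hX, by rw [lie_add, hY0, add_zero]⟩

end Reductive

variable {L : Type*} [LieRing L] [LieAlgebra ℝ L] {D : ℕ}

theorem lie_mem_span_image_compl_of_mem_hSpan (J : Fin D → Fin D → L) (B : Fin D → L)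
    (hJB : ∀ a b c, ⁅J a b, B c⁆ = kron b c • B a - kron a c • B b)
    (hBB : ∀ a b, ⁅B a, B b⁆ = 0) (a : Fin D) :
    ∀ X ∈ hSpan J B, ⁅B a, X⁆ ∈ Submodule.span ℝ (B '' {a}ᶜ) := by
  set S := Submodule.span ℝ (B '' {a}ᶜ)
  have hBS : ∀ c, c ≠ a → B c ∈ S := fun c hc => Submodule.subset_span ⟨c, hc, rfl⟩
  suffices hSpan J B ≤ S.comap (LieAlgebra.ad ℝ L (B a)) from fun X hX => this hX
  refine Submodule.span_le.mpr (Set.union_subset ?_ ?_)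
  · rintro _ ⟨⟨p, q⟩, rfl⟩
    change ⁅B a, J p q⁆ ∈ S
    rw [← lie_skew, hJB, neg_sub]
    by_cases hp : p = a <;> by_cases hq : q = a
    · simp [hp, hq]
    · simp [kron, hp, hq, hBS q hq]
    · simp [kron, hp, hq, hBS p hp]
    · simp [kron, hp, hq]
  · rintro _ ⟨c, rfl⟩
    change ⁅B a, B c⁆ ∈ S
    rw [hBB]
    exact S.zero_mem

end Stmt3

open Stmt3 in
theorem stmt3_general {D : ℕ} (hD : 2 ≤ D) {L : Type*} [LieRing L] [LieAlgebra ℝ L]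
    (J : Fin D → Fin D → L) (B P : Fin D → L) (H : L)
    (hindep : LinearIndependent ℝ (kinFam J B P H))
    (hJB : ∀ a b c, ⁅J a b, B c⁆ = kron b c • B a - kron a c • B b)
    (hHB : ∀ a, ⁅H, B a⁆ = B a)
    (hBB : ∀ a b, ⁅B a, B b⁆ = 0) :
    ¬ ∃ m : Submodule ℝ L, IsCompl (hSpan J B) m ∧
        ∀ X ∈ hSpan J B, ∀ Y ∈ m, ⁅X, Y⁆ ∈ m := by
  rintro ⟨m, hc, hm⟩
  let a : Fin D := ⟨0, by omega⟩
  have hB : LinearIndependent ℝ B :=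
    hindep.comp (Sum.inr ∘ Sum.inl) (Sum.inr_injective.comp Sum.inl_injective)
  have hBh : ∀ c, B c ∈ hSpan J B := fun c => Submodule.subset_span (Or.inr ⟨c, rfl⟩)
  have had := lie_mem_span_image_compl_of_mem_hSpan J B hJB hBB a
  have hspan_le : Submodule.span ℝ (B '' {a}ᶜ) ≤ hSpan J B :=
    Submodule.span_le.mpr (Set.image_subset_iff.mpr fun c _ => hBh c)
  have hBH : ⁅B a, H⁆ = -B a := by rw [← lie_skew, hHB]
  obtain ⟨X, hX, hBX⟩ := exists_mem_lie_eq_of_isCompl hc hm (hBh a)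
    (fun X hX => hspan_le (had X hX)) (hBH ▸ (hSpan J B).neg_mem (hBh a))
  refine hB.notMem_span_image (s := {a}ᶜ) (x := a) (Set.notMem_compl_iff.mpr rfl) ?_
  rw [← neg_neg (B a), ← hBH, hBX]
  exact Submodule.neg_mem _ (had X hX)

open Stmt3 in
/-- Let `k` be the kinematical Lie algebra (isomorphic to `so(D+1,1)`, `D ≥ 2`) with basis
`{J_{ab}, B_a, P_a, H}` and nonzero brackets `[J,J]`, `[J,B]`, `[J,P]` as usual and
`[H,B_a] = B_a`, `[H,P_a] = −P_a`, `[B_a,P_b] = δ_{ab}H + J_{ab}`, and let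
`h = span{J_{ab}, B_a}`.  Then the Lie pair `(k,h)` is not reductive: there is no
complement `m` of `h` in `k` with `[h,m] ⊆ m`. -/
theorem stmt3 {D : ℕ} (hD : 2 ≤ D) {L : Type*} [LieRing L] [LieAlgebra ℝ L]
    (J : Fin D → Fin D → L) (B P : Fin D → L) (H : L)
    (hJskew : ∀ a b, J a b = -J b a)
    (hindep : LinearIndependent ℝ (kinFam J B P H))
    (hspan : Submodule.span ℝ (Set.range (kinFam J B P H)) = ⊤)
    (hJJ : ∀ a b c d, ⁅J a b, J c d⁆ =
        kron b c • J a d - kron a c • J b d - kron b d • J a c + kron a d • J b c)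
    (hJB : ∀ a b c, ⁅J a b, B c⁆ = kron b c • B a - kron a c • B b)
    (hJP : ∀ a b c, ⁅J a b, P c⁆ = kron b c • P a - kron a c • P b)
    (hJH : ∀ a b, ⁅J a b, H⁆ = 0)
    (hHB : ∀ a, ⁅H, B a⁆ = B a)
    (hHP : ∀ a, ⁅H, P a⁆ = -P a)
    (hBB : ∀ a b, ⁅B a, B b⁆ = 0)
    (hPP : ∀ a b, ⁅P a, P b⁆ = 0)
    (hBP : ∀ a b, ⁅B a, P b⁆ = kron a b • H + J a b) :
    ¬ ∃ m : Submodule ℝ L, IsCompl (hSpan J B) m ∧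
        ∀ X ∈ hSpan J B, ∀ Y ∈ m, ⁅X, Y⁆ ∈ m :=
  stmt3_general hD J B P H hindep hJB hHB hBB
end

section
/- Let D ≥ 2 and let (k,h) be the light-cone Lie pair: k is the real Lie algebra with basis {J_{ab}, B_a, P_a, H} and nonzero brackets [J_{ab},J_{cd}] = δ_{bc}J_{ad} − δ_{ac}J_{bd} − δ_{bd}J_{ac} + δ_{ad}J_{bc}, [J_{ab},B_c] = δ_{bc}B_a − δ_{ac}B_b, [J_{ab},P_c] = δ_{bc}P_a − δ_{ac}P_b, [H,B_a] = B_a, [H,P_a] = −P_a, [B_a,P_b] = δ_{ab}H + J_{ab}, and h = span{J_{ab}, B_a}. Let λ: h → End(k/h) be the linear isotropy representation, λ_X(Y + h) = [X,Y] + h. Then there exists NO linear map Λ: k → End(k/h) satisfying both (i) Λ_X = λ_X for all X ∈ h, and (ii) λ_Z ∘ Λ_X − Λ_X ∘ λ_Z = Λ_{[Z,X]} for all Z ∈ h and X ∈ k. In other words, the homogeneous spacetime LC admits no invariant affine connection when D ≥ 2. -/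
namespace Stmt4

/-- Kronecker delta. -/
def kron {n : ℕ} (a b : Fin n) : ℝ := if a = b then 1 else 0

/-- The family `{J_{ab} (a < b), B_a, P_a, H}`, indexing a basis of a kinematical Lie
algebra. -/
def kinFam {L : Type*} {D : ℕ} (J : Fin D → Fin D → L) (B P : Fin D → L) (H : L) :
    ({p : Fin D × Fin D // p.1 < p.2} ⊕ (Fin D ⊕ (Fin D ⊕ Unit))) → L :=
  Sum.elim (fun p => J p.1.1 p.1.2) (Sum.elim B (Sum.elim P fun _ => H))

/-- The subalgebra `h` spanned by the `J_{ab}` and the `B_a`. -/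
def hSpan {L : Type*} [AddCommGroup L] [Module ℝ L] {D : ℕ}
    (J : Fin D → Fin D → L) (B : Fin D → L) : Submodule ℝ L :=
  Submodule.span ℝ ((Set.range fun p : Fin D × Fin D => J p.1 p.2) ∪ Set.range B)

end Stmt4

/-!
Equivariance at `Z = B_b`, `X = Y = P_a` with `a ≠ b` kills the connection. Since
`[B_b, P_a] = J_{ba} ∈ h`, the condition reduces to `[B_b, W] ≡ [J_{ba}, P_a] = P_b (mod h)`
for any representative `W` of `Λ_{P_a}(P_a + h)`. But `ad B_b` maps all of `k` into
`span{J, B, H}`, which contains `h` and not `P_b`.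
-/

namespace LiePair

variable {R L : Type*} [CommRing R] [LieRing L] [LieAlgebra R L]

def IsInvariantConnection (h : Submodule R L) (Λ : L →ₗ[R] Module.End R (L ⧸ h)) : Prop :=
  (∀ X ∈ h, ∀ Y : L, Λ X (Submodule.Quotient.mk Y) = Submodule.Quotient.mk ⁅X, Y⁆) ∧
    (∀ Z ∈ h, ∀ X Y : L,
      Λ Z (Λ X (Submodule.Quotient.mk Y)) - Λ X (Submodule.Quotient.mk ⁅Z, Y⁆)
        = Λ ⁅Z, X⁆ (Submodule.Quotient.mk Y))

theorem not_isInvariantConnection_of_lie_lie_notMem {h M : Submodule R L} (hhM : h ≤ M)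
    {Z X : L} (hZ : Z ∈ h) (hZX : ⁅Z, X⁆ ∈ h) (had : ∀ W : L, ⁅Z, W⁆ ∈ M)
    (hX : ⁅⁅Z, X⁆, X⁆ ∉ M) (Λ : L →ₗ[R] Module.End R (L ⧸ h)) :
    ¬ IsInvariantConnection h Λ := by
  rintro ⟨hres, hequiv⟩
  obtain ⟨W, hW⟩ := Submodule.Quotient.mk_surjective h (Λ X (Submodule.Quotient.mk X))
  have hWX := hequiv Z hZ X X
  rw [(Submodule.Quotient.mk_eq_zero h).2 hZX, map_zero, sub_zero, ← hW, hres Z hZ,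
    hres _ hZX, Submodule.Quotient.eq] at hWX
  exact hX (sub_sub_cancel ⁅Z, W⁆ ⁅⁅Z, X⁆, X⁆ ▸ sub_mem (had W) (hhM hWX))

end LiePair

namespace LightCone

open Stmt4

variable {D : ℕ} {L : Type*} [LieRing L] [LieAlgebra ℝ L]
  (J : Fin D → Fin D → L) (B P : Fin D → L) (H : L)

def spanJBH : Submodule ℝ L :=
  Submodule.span ℝ ((Set.range fun p : Fin D × Fin D => J p.1 p.2) ∪ Set.range B ∪ {H})

theorem hSpan_le_spanJBH : hSpan J B ≤ spanJBH J B H :=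
  Submodule.span_mono Set.subset_union_left

variable {J B P H}

theorem lie_B_mem_spanJBH (hspan : Submodule.span ℝ (Set.range (kinFam J B P H)) = ⊤)
    (hJB : ∀ a b c, ⁅J a b, B c⁆ = kron b c • B a - kron a c • B b)
    (hHB : ∀ a, ⁅H, B a⁆ = B a)
    (hBB : ∀ a b, ⁅B a, B b⁆ = 0)
    (hBP : ∀ a b, ⁅B a, P b⁆ = kron a b • H + J a b) (b : Fin D) (W : L) :
    ⁅B b, W⁆ ∈ spanJBH J B H := by
  set M := spanJBH J B H
  have hJ : ∀ c d, J c d ∈ M := fun c d =>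
    Submodule.subset_span (Or.inl (Or.inl ⟨(c, d), rfl⟩))
  have hB : ∀ c, B c ∈ M := fun c => Submodule.subset_span (Or.inl (Or.inr ⟨c, rfl⟩))
  have hH : H ∈ M := Submodule.subset_span (Or.inr rfl)
  suffices ⊤ ≤ M.comap (LieAlgebra.ad ℝ L (B b)) from this Submodule.mem_top
  rw [← hspan, Submodule.span_le]
  rintro _ ⟨⟨⟨c, d⟩, -⟩ | c | c | -, rfl⟩
  · change ⁅B b, J c d⁆ ∈ M
    rw [← lie_skew, hJB]
    exact neg_mem (sub_mem (M.smul_mem _ (hB c)) (M.smul_mem _ (hB d)))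
  · change ⁅B b, B c⁆ ∈ M
    rw [hBB]
    exact M.zero_mem
  · change ⁅B b, P c⁆ ∈ M
    rw [hBP]
    exact add_mem (M.smul_mem _ hH) (hJ b c)
  · change ⁅B b, H⁆ ∈ M
    rw [← lie_skew, hHB]
    exact neg_mem (hB b)

theorem P_notMem_spanJBH (hJskew : ∀ a b, J a b = -J b a)
    (hindep : LinearIndependent ℝ (kinFam J B P H)) (b : Fin D) :
    P b ∉ spanJBH J B H := by
  set s := (Set.range fun c : Fin D => Sum.inr (Sum.inr (Sum.inl c)) :
    Set ({p : Fin D × Fin D // p.1 < p.2} ⊕ (Fin D ⊕ (Fin D ⊕ Unit))))ᶜ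
  set N := Submodule.span ℝ (kinFam J B P H '' s)
  have hJ_lt : ∀ c d, c < d → J c d ∈ N := fun c d hcd =>
    Submodule.subset_span ⟨Sum.inl ⟨(c, d), hcd⟩, by simp [s], rfl⟩
  have hJ : ∀ c d, J c d ∈ N := by
    intro c d
    rcases lt_trichotomy c d with hcd | rfl | hcd
    · exact hJ_lt c d hcd
    · have : IsAddTorsionFree L := .of_isTorsionFree ℝ L
      rw [self_eq_neg.mp (hJskew c c)]
      exact N.zero_mem
    · rw [hJskew]
      exact neg_mem (hJ_lt d c hcd)
  have hle : spanJBH J B H ≤ N := by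
    rw [spanJBH, Submodule.span_le]
    rintro _ ((⟨⟨c, d⟩, rfl⟩ | ⟨c, rfl⟩) | rfl)
    · exact hJ c d
    · exact Submodule.subset_span ⟨Sum.inr (Sum.inl c), by simp [s], rfl⟩
    · exact Submodule.subset_span ⟨Sum.inr (Sum.inr (Sum.inr ())), by simp [s], rfl⟩
  exact fun hP => hindep.notMem_span_image (x := Sum.inr (Sum.inr (Sum.inl b)))
    (by simp [s]) (hle hP)

end LightCone

open Stmt4 in
theorem stmt4_general {D : ℕ} (hD : 2 ≤ D) {L : Type*} [LieRing L] [LieAlgebra ℝ L]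
    (J : Fin D → Fin D → L) (B P : Fin D → L) (H : L)
    (hJskew : ∀ a b, J a b = -J b a)
    (hindep : LinearIndependent ℝ (kinFam J B P H))
    (hspan : Submodule.span ℝ (Set.range (kinFam J B P H)) = ⊤)
    (hJB : ∀ a b c, ⁅J a b, B c⁆ = kron b c • B a - kron a c • B b)
    (hJP : ∀ a b c, ⁅J a b, P c⁆ = kron b c • P a - kron a c • P b)
    (hHB : ∀ a, ⁅H, B a⁆ = B a)
    (hBB : ∀ a b, ⁅B a, B b⁆ = 0)
    (hBP : ∀ a b, ⁅B a, P b⁆ = kron a b • H + J a b) :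
    ¬ ∃ Λ : L →ₗ[ℝ] Module.End ℝ (L ⧸ hSpan J B),
        (∀ X ∈ hSpan J B, ∀ Y : L,
          Λ X (Submodule.Quotient.mk Y) = Submodule.Quotient.mk ⁅X, Y⁆) ∧
        (∀ Z ∈ hSpan J B, ∀ X Y : L,
          Λ Z (Λ X (Submodule.Quotient.mk Y)) - Λ X (Submodule.Quotient.mk ⁅Z, Y⁆)
            = Λ ⁅Z, X⁆ (Submodule.Quotient.mk Y)) := by
  rintro ⟨Λ, hΛ⟩
  let a : Fin D := ⟨0, by omega⟩
  let b : Fin D := ⟨1, by omega⟩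
  have hba : kron b a = 0 := if_neg (by simp [a, b, Fin.ext_iff])
  have hBbP : ⁅B b, P a⁆ = J b a := by rw [hBP, hba, zero_smul, zero_add]
  have hJbaP : ⁅J b a, P a⁆ = P b := by
    rw [hJP, hba, kron, if_pos rfl, one_smul, zero_smul, sub_zero]
  refine LiePair.not_isInvariantConnection_of_lie_lie_notMem
    (LightCone.hSpan_le_spanJBH J B H) (Z := B b) (X := P a)
    (Submodule.subset_span (Or.inr ⟨b, rfl⟩)) ?_
    (LightCone.lie_B_mem_spanJBH hspan hJB hHB hBB hBP b) ?_ Λ hΛ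
  · rw [hBbP]
    exact Submodule.subset_span (Or.inl ⟨(b, a), rfl⟩)
  · rw [hBbP, hJbaP]
    exact LightCone.P_notMem_spanJBH hJskew hindep b

open Stmt4 in
/-- Let `(k,h)` be the light-cone Lie pair in `D ≥ 2`: `k` has basis `{J_{ab}, B_a, P_a, H}`
with nonzero brackets `[J,J]`, `[J,B]`, `[J,P]` as usual and `[H,B_a] = B_a`,
`[H,P_a] = −P_a`, `[B_a,P_b] = δ_{ab}H + J_{ab}`, and `h = span{J_{ab}, B_a}`.  Then there is
no linear map `Λ : k → End(k/h)` restricting on `h` to the linear isotropy representation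
`λ_X(Ȳ) = [X,Y] + h` and satisfying the `h`-equivariance condition
`λ_Z ∘ Λ_X − Λ_X ∘ λ_Z = Λ_{[Z,X]}` for all `Z ∈ h`, `X ∈ k`: the homogeneous spacetime `LC`
admits no invariant affine connection when `D ≥ 2`. -/
theorem stmt4 {D : ℕ} (hD : 2 ≤ D) {L : Type*} [LieRing L] [LieAlgebra ℝ L]
    (J : Fin D → Fin D → L) (B P : Fin D → L) (H : L)
    (hJskew : ∀ a b, J a b = -J b a)
    (hindep : LinearIndependent ℝ (kinFam J B P H))
    (hspan : Submodule.span ℝ (Set.range (kinFam J B P H)) = ⊤)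
    (hJJ : ∀ a b c d, ⁅J a b, J c d⁆ =
        kron b c • J a d - kron a c • J b d - kron b d • J a c + kron a d • J b c)
    (hJB : ∀ a b c, ⁅J a b, B c⁆ = kron b c • B a - kron a c • B b)
    (hJP : ∀ a b c, ⁅J a b, P c⁆ = kron b c • P a - kron a c • P b)
    (hJH : ∀ a b, ⁅J a b, H⁆ = 0)
    (hHB : ∀ a, ⁅H, B a⁆ = B a)
    (hHP : ∀ a, ⁅H, P a⁆ = -P a)
    (hBB : ∀ a b, ⁅B a, B b⁆ = 0)
    (hPP : ∀ a b, ⁅P a, P b⁆ = 0)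
    (hBP : ∀ a b, ⁅B a, P b⁆ = kron a b • H + J a b) :
    ¬ ∃ Λ : L →ₗ[ℝ] Module.End ℝ (L ⧸ hSpan J B),
        (∀ X ∈ hSpan J B, ∀ Y : L,
          Λ X (Submodule.Quotient.mk Y) = Submodule.Quotient.mk ⁅X, Y⁆) ∧
        (∀ Z ∈ hSpan J B, ∀ X Y : L,
          Λ Z (Λ X (Submodule.Quotient.mk Y)) - Λ X (Submodule.Quotient.mk ⁅Z, Y⁆)
            = Λ ⁅Z, X⁆ (Submodule.Quotient.mk Y)) :=
  stmt4_general hD J B P H hJskew hindep hspan hJB hJP hHB hBB hBP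
end

section
/- Let k be the 3-dimensional real Lie algebra with basis {H, B, P} and brackets [H,B] = B, [H,P] = −P, [B,P] = H, and let h = ℝB. Write H̄, P̄ for the images of H, P in k/h, so {H̄, P̄} is a basis of k/h, and let λ: h → End(k/h) be the linear isotropy representation, so λ_B H̄ = 0 and λ_B P̄ = H̄. Then a linear map Λ: k → End(k/h) with Λ_B = λ_B satisfies the invariance condition λ_B ∘ Λ_X − Λ_X ∘ λ_B = Λ_{[B,X]} for all X ∈ k if and only if there exist real numbers β, γ, δ such that Λ_H H̄ = (1/2)H̄, Λ_H P̄ = βH̄ − (1/2)P̄, Λ_P H̄ = γH̄ + (1/2)P̄, and Λ_P P̄ = δH̄ + (β+γ)P̄. Hence the invariant affine connections on this Lie pair form a three-parameter family. -/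
/-!
Since `Λ` is linear and `k` is spanned by `H, B, P`, invariance only has to be checked at `X = H`
and `X = P` (at `X = B` both sides vanish), where it reads `⁅Λ_B, Λ_H⁆ = -Λ_B` and
`⁅Λ_B, Λ_P⁆ = Λ_H`, with `Λ_B` the nilpotent Jordan block `P̄ ↦ H̄ ↦ 0` on `k/h`. In the basis
`H̄, P̄` these are five independent linear equations on the eight matrix entries of `Λ_H` and
`Λ_P`, leaving `β, γ, δ` free. The `±1/2` appear because `Λ_H = ⁅Λ_B, Λ_P⁆` is traceless while
`⁅Λ_B, Λ_H⁆ = -Λ_B` forces its diagonal entries to differ by `1`.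
-/

open Submodule LieAlgebra

theorem Module.End.bracket_apply {R M : Type*} [Ring R] [AddCommGroup M] [Module R M]
    (f g : Module.End R M) (x : M) : ⁅f, g⁆ x = f (g x) - g (f x) := by
  rw [LieRing.of_associative_ring_bracket]
  rfl

section PlaneEndomorphisms

variable {K V : Type*} [Field K] [AddCommGroup V] [Module K V] {u v : V}

theorem exists_eq_smul_add_smul_of_span_pair_eq_top (hsp : span K {u, v} = ⊤) (x : V) :
    ∃ a b : K, x = a • u + b • v := by
  obtain ⟨a, b, h⟩ := mem_span_pair.1 (hsp ▸ mem_top : x ∈ span K {u, v})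
  exact ⟨a, b, h.symm⟩

theorem LinearMap.ext_of_span_pair_eq_top {W : Type*} [AddCommGroup W] [Module K W]
    (hsp : span K {u, v} = ⊤) {f g : V →ₗ[K] W} (hu : f u = g u) (hv : f v = g v) : f = g :=
  LinearMap.ext_on hsp (by rintro x (rfl | rfl) <;> assumption)

theorem Module.End.lie_eq_neg_and_lie_eq_iff [NeZero (2 : K)] (hli : LinearIndependent K ![u, v])
    (hsp : span K {u, v} = ⊤) {E A C : Module.End K V} (hEu : E u = 0) (hEv : E v = u) :
    (⁅E, A⁆ = -E ∧ ⁅E, C⁆ = A) ↔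
      ∃ β γ δ : K, A u = (1 / 2 : K) • u ∧ A v = β • u - (1 / 2 : K) • v ∧
        C u = γ • u + (1 / 2 : K) • v ∧ C v = δ • u + (β + γ) • v := by
  constructor
  · rintro ⟨hA, hC⟩
    obtain ⟨a, b, hAu⟩ := exists_eq_smul_add_smul_of_span_pair_eq_top hsp (A u)
    obtain ⟨c, d, hAv⟩ := exists_eq_smul_add_smul_of_span_pair_eq_top hsp (A v)
    obtain ⟨e, f, hCu⟩ := exists_eq_smul_add_smul_of_span_pair_eq_top hsp (C u)
    obtain ⟨g, k, hCv⟩ := exists_eq_smul_add_smul_of_span_pair_eq_top hsp (C v)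
    have eAu := LinearMap.congr_fun hA u
    have eAv := LinearMap.congr_fun hA v
    have eCu := LinearMap.congr_fun hC u
    have eCv := LinearMap.congr_fun hC v
    simp only [Module.End.bracket_apply, LinearMap.neg_apply, hAu, hAv, hCu, hCv, hEu, hEv,
      map_add, map_smul, map_zero, smul_zero, zero_add, sub_zero, neg_zero] at eAu eAv eCu eCv
    obtain ⟨hb, -⟩ := hli.eq_of_pair (s := b) (t := 0) (s' := 0) (t' := 0)
      (by linear_combination (norm := module) eAu)
    obtain ⟨hda, -⟩ := hli.eq_of_pair (s := d - a) (t := -b) (s' := -1) (t' := 0)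
      (by linear_combination (norm := module) eAv)
    obtain ⟨hfa, -⟩ := hli.eq_of_pair (s := f) (t := 0) (s' := a) (t' := b)
      (by linear_combination (norm := module) eCu)
    obtain ⟨hkec, hfd⟩ := hli.eq_of_pair (s := k - e) (t := -f) (s' := c) (t' := d)
      (by linear_combination (norm := module) eCv)
    have ha : a = 1 / 2 := by field_simp; linear_combination -hfa - hfd - hda
    refine ⟨c, e, g, ?_, ?_, ?_, ?_⟩
    · rw [hAu, hb, ha, zero_smul, add_zero]
    · rw [hAv, ← hfd, hfa, ha, neg_smul, ← sub_eq_add_neg]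
    · rw [hCu, hfa, ha]
    · rw [hCv, ← hkec, sub_add_cancel]
  · rintro ⟨β, γ, δ, hAu, hAv, hCu, hCv⟩
    constructor <;> refine LinearMap.ext_of_span_pair_eq_top hsp ?_ ?_ <;>
      simp only [Module.End.bracket_apply, LinearMap.neg_apply, hAu, hAv, hCu, hCv, hEu, hEv,
        map_add, map_sub, map_smul, map_zero, smul_zero, zero_add, sub_zero, neg_zero] <;>
      match_scalars <;> field_simp <;> ring

end PlaneEndomorphisms

section QuotientBySingleton

variable {R M : Type*} [Ring R] [AddCommGroup M] [Module R M] {x y z : M}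

theorem linearIndependent_mk_pair_of_linearIndependent (h : LinearIndependent R ![x, y, z]) :
    LinearIndependent R
      ![(Submodule.Quotient.mk x : M ⧸ span R {y}), Submodule.Quotient.mk z] := by
  refine LinearIndependent.pair_iff.2 fun s t hst => ?_
  have hmem : s • x + t • z ∈ span R {y} := by
    rwa [← Submodule.Quotient.mk_eq_zero, Submodule.Quotient.mk_add, Submodule.Quotient.mk_smul,
      Submodule.Quotient.mk_smul]
  obtain ⟨c, hc⟩ := mem_span_singleton.1 hmem
  have hcoeff := Fintype.linearIndependent_iff.1 h ![s, -c, t] (by simp [Fin.sum_univ_three, hc])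
  exact ⟨hcoeff 0, hcoeff 2⟩

theorem span_mk_pair_eq_top_of_span_eq_top (h : span R {x, y, z} = ⊤) :
    span R {(Submodule.Quotient.mk x : M ⧸ span R {y}), Submodule.Quotient.mk z} = ⊤ := by
  have himage := congrArg (map (span R {y}).mkQ) h
  rw [← span_image, Submodule.map_top, range_mkQ] at himage
  simp only [Set.image_insert_eq, Set.image_singleton, mkQ_apply] at himage
  rwa [(Submodule.Quotient.mk_eq_zero _).2 (mem_span_singleton_self y), Set.insert_comm,
    span_insert_zero] at himage

end QuotientBySingleton

section Invariance

variable {R L : Type*} [CommRing R] [LieRing L] [LieAlgebra R L]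

theorem forall_invariance_iff_forall_lie_eq {N : Submodule R L}
    {Λ : L →ₗ[R] Module.End R (L ⧸ N)} {B : L}
    (hΛB : ∀ Y, Λ B (Submodule.Quotient.mk Y) = Submodule.Quotient.mk ⁅B, Y⁆) :
    (∀ X Y : L, Λ B (Λ X (Submodule.Quotient.mk Y)) - Λ X (Submodule.Quotient.mk ⁅B, Y⁆) =
        Λ ⁅B, X⁆ (Submodule.Quotient.mk Y)) ↔
      ∀ X : L, ⁅Λ B, Λ X⁆ = Λ ⁅B, X⁆ := by
  simp only [← hΛB, ← Module.End.bracket_apply]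
  refine ⟨fun h X => linearMap_qext _ (LinearMap.ext (h X)), fun h X Y => by rw [h X]⟩

theorem LinearMap.forall_lie_eq_iff_of_span_eq_top {A : Type*} [LieRing A] [LieAlgebra R A]
    (Λ : L →ₗ[R] A) {H B P : L} (hspan : span R {H, B, P} = ⊤) :
    (∀ X : L, ⁅Λ B, Λ X⁆ = Λ ⁅B, X⁆) ↔ ⁅Λ B, Λ H⁆ = Λ ⁅B, H⁆ ∧ ⁅Λ B, Λ P⁆ = Λ ⁅B, P⁆ := by
  refine ⟨fun h => ⟨h H, h P⟩, fun ⟨hH, hP⟩ X => ?_⟩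
  have hext : ad R A (Λ B) ∘ₗ Λ = Λ ∘ₗ ad R L B := by
    refine LinearMap.ext_on hspan ?_
    rintro X (rfl | rfl | rfl)
    · exact hH
    · simp
    · exact hP
  exact LinearMap.congr_fun hext X

end Invariance

attribute [local instance 100] LieRing.ofAssociativeRing

theorem stmt5_general {L : Type*} [LieRing L] [LieAlgebra ℝ L] (H B P : L)
    (hindep : LinearIndependent ℝ ![H, B, P])
    (hspan : Submodule.span ℝ {H, B, P} = ⊤)
    (hHB : ⁅H, B⁆ = B) (hBP : ⁅B, P⁆ = H)
    (Λ : L →ₗ[ℝ] Module.End ℝ (L ⧸ Submodule.span ℝ {B}))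
    (hΛB : ∀ Y : L, Λ B (Submodule.Quotient.mk Y) = Submodule.Quotient.mk ⁅B, Y⁆) :
    (∀ X Y : L,
        Λ B (Λ X (Submodule.Quotient.mk Y)) - Λ X (Submodule.Quotient.mk ⁅B, Y⁆)
          = Λ ⁅B, X⁆ (Submodule.Quotient.mk Y)) ↔
      ∃ β γ δ : ℝ,
        Λ H (Submodule.Quotient.mk H) = (1 / 2 : ℝ) • Submodule.Quotient.mk H ∧
        Λ H (Submodule.Quotient.mk P) =
          β • Submodule.Quotient.mk H - (1 / 2 : ℝ) • Submodule.Quotient.mk P ∧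
        Λ P (Submodule.Quotient.mk H) =
          γ • Submodule.Quotient.mk H + (1 / 2 : ℝ) • Submodule.Quotient.mk P ∧
        Λ P (Submodule.Quotient.mk P) =
          δ • Submodule.Quotient.mk H + (β + γ) • Submodule.Quotient.mk P := by
  have hBH : ⁅B, H⁆ = -B := by rw [← lie_skew, hHB]
  have hEu : Λ B (Submodule.Quotient.mk H) = 0 := by
    rw [hΛB, hBH, Submodule.Quotient.mk_neg,
      (Submodule.Quotient.mk_eq_zero _).2 (mem_span_singleton_self B), neg_zero]
  have hEv : Λ B (Submodule.Quotient.mk P) = Submodule.Quotient.mk H := by rw [hΛB, hBP]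
  rw [forall_invariance_iff_forall_lie_eq hΛB,
    LinearMap.forall_lie_eq_iff_of_span_eq_top Λ hspan, hBH, hBP, map_neg]
  exact Module.End.lie_eq_neg_and_lie_eq_iff (linearIndependent_mk_pair_of_linearIndependent hindep)
    (span_mk_pair_eq_top_of_span_eq_top hspan) hEu hEv

/-- Let `k` be the 3-dimensional real Lie algebra with basis `{H, B, P}` and brackets
`[H,B] = B`, `[H,P] = −P`, `[B,P] = H` (the `D = 1` light-cone Lie pair, `k ≅ sl(2,ℝ)`),
and let `h = ℝB`.  A linear map `Λ : k → End(k/h)` with `Λ_B = λ_B` (the linear isotropy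
representation) satisfies the invariance condition `λ_B ∘ Λ_X − Λ_X ∘ λ_B = Λ_{[B,X]}` for
all `X ∈ k` if and only if there are `β, γ, δ ∈ ℝ` with `Λ_H H̄ = (1/2)H̄`,
`Λ_H P̄ = βH̄ − (1/2)P̄`, `Λ_P H̄ = γH̄ + (1/2)P̄` and `Λ_P P̄ = δH̄ + (β+γ)P̄`.
Hence the invariant affine connections form a three-parameter family. -/
theorem stmt5 {L : Type*} [LieRing L] [LieAlgebra ℝ L] (H B P : L)
    (hindep : LinearIndependent ℝ ![H, B, P])
    (hspan : Submodule.span ℝ {H, B, P} = ⊤)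
    (hHB : ⁅H, B⁆ = B) (hHP : ⁅H, P⁆ = -P) (hBP : ⁅B, P⁆ = H)
    (Λ : L →ₗ[ℝ] Module.End ℝ (L ⧸ Submodule.span ℝ {B}))
    (hΛB : ∀ Y : L, Λ B (Submodule.Quotient.mk Y) = Submodule.Quotient.mk ⁅B, Y⁆) :
    (∀ X Y : L,
        Λ B (Λ X (Submodule.Quotient.mk Y)) - Λ X (Submodule.Quotient.mk ⁅B, Y⁆)
          = Λ ⁅B, X⁆ (Submodule.Quotient.mk Y)) ↔
      ∃ β γ δ : ℝ,
        Λ H (Submodule.Quotient.mk H) = (1 / 2 : ℝ) • Submodule.Quotient.mk H ∧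
        Λ H (Submodule.Quotient.mk P) =
          β • Submodule.Quotient.mk H - (1 / 2 : ℝ) • Submodule.Quotient.mk P ∧
        Λ P (Submodule.Quotient.mk H) =
          γ • Submodule.Quotient.mk H + (1 / 2 : ℝ) • Submodule.Quotient.mk P ∧
        Λ P (Submodule.Quotient.mk P) =
          δ • Submodule.Quotient.mk H + (β + γ) • Submodule.Quotient.mk P :=
  stmt5_general H B P hindep hspan hHB hBP Λ hΛB
end

section
/- Let k be the 3-dimensional real Lie algebra with basis {H, B, P} and brackets [H,B] = B, [H,P] = −P, [B,P] = H, let h = ℝB, and write H̄, P̄ for the images of H, P in k/h. For an invariant connection Λ: k → End(k/h) (i.e., Λ_B equals the linear isotropy representation and Λ is h-equivariant), define its torsion Θ(X̄,Ȳ) := Λ_X Ȳ − Λ_Y X̄ − ([X,Y] + h) and its curvature Ω(X̄,Ȳ) := Λ_X ∘ Λ_Y − Λ_Y ∘ Λ_X − Λ_{[X,Y]} ∈ End(k/h) (both well defined). Then there is a UNIQUE invariant connection with Θ = 0 and Ω = 0, namely the one given by Λ_H H̄ = (1/2)H̄, Λ_H P̄ = −(1/2)P̄, Λ_P H̄ =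 (1/2)P̄, Λ_P P̄ = 0. -/
/-
Flatness makes `Λ` a representation of `k ≅ 𝔰𝔩₂(ℝ)` on the plane `k/h`, and invariance fixes
`Λ_B` as the isotropy action `H̄ ↦ 0`, `P̄ ↦ H̄`. In the basis `H̄, P̄`, the relations
`[Λ_B, Λ_H] = −Λ_B`, `[Λ_B, Λ_P] = Λ_H`, `[Λ_H, Λ_P] = −Λ_P` and the torsion condition at
`(H, P)` become polynomial equations in the entries of `Λ_H` and `Λ_P` that can be solved by
successive substitution; the only solution is the standard representation of `𝔰𝔩₂(ℝ)`.
Conversely, that representation is flat, and it is torsion-free because `X ↦ Λ_X (2H̄)` is the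
projection `k → k/h`, so that its torsion is its curvature applied to `2H̄`.
-/

namespace Stmt6

/-- The conditions for `Λ : k → End(k/ℝB)` to be a flat, torsion-free invariant affine
connection on the `D = 1` light-cone Lie pair: `Λ_B` is the linear isotropy representation,
`Λ` is `h`-equivariant, and the torsion `Θ(X̄,Ȳ) = Λ_X Ȳ − Λ_Y X̄ − mk[X,Y]` and curvature
`Ω(X̄,Ȳ) = Λ_X ∘ Λ_Y − Λ_Y ∘ Λ_X − Λ_{[X,Y]}` vanish. -/
def IsFlatTorsionFreeInvariantConnection {L : Type*} [LieRing L] [LieAlgebra ℝ L]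
    (B : L) (Λ : L →ₗ[ℝ] Module.End ℝ (L ⧸ Submodule.span ℝ {B})) : Prop :=
  (∀ Y : L, Λ B (Submodule.Quotient.mk Y) = Submodule.Quotient.mk ⁅B, Y⁆) ∧
  (∀ X Y : L,
    Λ B (Λ X (Submodule.Quotient.mk Y)) - Λ X (Submodule.Quotient.mk ⁅B, Y⁆)
      = Λ ⁅B, X⁆ (Submodule.Quotient.mk Y)) ∧
  (∀ X Y : L,
    Λ X (Submodule.Quotient.mk Y) - Λ Y (Submodule.Quotient.mk X)
      - Submodule.Quotient.mk ⁅X, Y⁆ = 0) ∧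
  (∀ X Y Z : L,
    Λ X (Λ Y (Submodule.Quotient.mk Z)) - Λ Y (Λ X (Submodule.Quotient.mk Z))
      - Λ ⁅X, Y⁆ (Submodule.Quotient.mk Z) = 0)

end Stmt6

section QuotientBasis

variable {R M : Type*} [Ring R] [AddCommGroup M] [Module R M] {x y z : M}

@[simp]
theorem Submodule.Quotient.mk_self_span_singleton (v : M) :
    (Submodule.Quotient.mk v : M ⧸ Submodule.span R {v}) = 0 :=
  (Submodule.Quotient.mk_eq_zero _).2 (Submodule.mem_span_singleton_self v)

theorem linearIndependent_mk_pair_quotient_span_singleton (hli : LinearIndependent R ![x, y, z]) :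
    LinearIndependent R
      ![(Submodule.Quotient.mk x : M ⧸ Submodule.span R {y}), Submodule.Quotient.mk z] := by
  refine LinearIndependent.pair_iff.2 fun s t hst => ?_
  rw [← Submodule.Quotient.mk_smul, ← Submodule.Quotient.mk_smul, ← Submodule.Quotient.mk_add,
    Submodule.Quotient.mk_eq_zero, Submodule.mem_span_singleton] at hst
  obtain ⟨c, hc⟩ := hst
  have h := Fintype.linearIndependent_iff.mp hli ![s, -c, t] (by
    simp only [Fin.sum_univ_three, Matrix.cons_val_zero, Matrix.cons_val_one, Matrix.cons_val_two,
      Matrix.head_cons, Matrix.tail_cons, neg_smul, hc]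
    abel)
  exact ⟨h 0, h 2⟩

theorem span_mk_pair_quotient_span_singleton (hsp : Submodule.span R {x, y, z} = ⊤) :
    Submodule.span R
      {(Submodule.Quotient.mk x : M ⧸ Submodule.span R {y}), Submodule.Quotient.mk z} = ⊤ := by
  rw [eq_top_iff, ← Submodule.range_mkQ, LinearMap.range_eq_map, ← hsp, ← Submodule.span_image,
    Submodule.span_le]
  rintro _ ⟨w, hw, rfl⟩
  rcases hw with rfl | rfl | rfl
  · exact Submodule.subset_span (Set.mem_insert _ _)
  · rw [Submodule.mkQ_apply, Submodule.Quotient.mk_self_span_singleton]; exact zero_mem _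
  · exact Submodule.subset_span (Set.mem_insert_of_mem _ rfl)

noncomputable def basisOfTriple (hli : LinearIndependent R ![x, y, z])
    (hsp : Submodule.span R {x, y, z} = ⊤) : Module.Basis (Fin 3) R M :=
  .mk hli <| by
    rw [Matrix.range_cons, Matrix.range_cons, Matrix.range_cons_empty, Set.singleton_union,
      Set.singleton_union, hsp]

@[simp]
theorem coe_basisOfTriple (hli : LinearIndependent R ![x, y, z])
    (hsp : Submodule.span R {x, y, z} = ⊤) : ⇑(basisOfTriple hli hsp) = ![x, y, z] :=
  funext <| Module.Basis.mk_apply _ _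

noncomputable def basisQuotientSpanSingleton (hli : LinearIndependent R ![x, y, z])
    (hsp : Submodule.span R {x, y, z} = ⊤) : Module.Basis (Fin 2) R (M ⧸ Submodule.span R {y}) :=
  .mk (linearIndependent_mk_pair_quotient_span_singleton hli) <| by
    rw [Matrix.range_cons, Matrix.range_cons, Matrix.range_empty, Set.union_empty,
      Set.singleton_union, span_mk_pair_quotient_span_singleton hsp]

@[simp]
theorem basisQuotientSpanSingleton_zero (hli : LinearIndependent R ![x, y, z])
    (hsp : Submodule.span R {x, y, z} = ⊤) :
    basisQuotientSpanSingleton hli hsp 0 = Submodule.Quotient.mk x :=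
  Module.Basis.mk_apply _ _ _

@[simp]
theorem basisQuotientSpanSingleton_one (hli : LinearIndependent R ![x, y, z])
    (hsp : Submodule.span R {x, y, z} = ⊤) :
    basisQuotientSpanSingleton hli hsp 1 = Submodule.Quotient.mk z :=
  Module.Basis.mk_apply _ _ _

@[simp]
theorem basisQuotientSpanSingleton_repr_mk_fst (hli : LinearIndependent R ![x, y, z])
    (hsp : Submodule.span R {x, y, z} = ⊤) :
    (basisQuotientSpanSingleton hli hsp).repr (Submodule.Quotient.mk x) = Finsupp.single 0 1 := by
  rw [← basisQuotientSpanSingleton_zero hli hsp, Module.Basis.repr_self]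

@[simp]
theorem basisQuotientSpanSingleton_repr_mk_snd (hli : LinearIndependent R ![x, y, z])
    (hsp : Submodule.span R {x, y, z} = ⊤) :
    (basisQuotientSpanSingleton hli hsp).repr (Submodule.Quotient.mk z) = Finsupp.single 1 1 := by
  rw [← basisQuotientSpanSingleton_one hli hsp, Module.Basis.repr_self]

end QuotientBasis

section QuotientBasisMatrix

variable {R M : Type*} [CommRing R] [AddCommGroup M] [Module R M] {x y z : M}
  (hli : LinearIndependent R ![x, y, z]) (hsp : Submodule.span R {x, y, z} = ⊤)
  (A : Matrix (Fin 2) (Fin 2) R)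

@[simp]
theorem toLinAlgEquiv_basisQuotientSpanSingleton_apply_mk_fst :
    Matrix.toLinAlgEquiv (basisQuotientSpanSingleton hli hsp) A (Submodule.Quotient.mk x) =
      A 0 0 • Submodule.Quotient.mk x + A 1 0 • Submodule.Quotient.mk z := by
  rw [← basisQuotientSpanSingleton_zero hli hsp, Matrix.toLinAlgEquiv_self, Fin.sum_univ_two,
    basisQuotientSpanSingleton_zero, basisQuotientSpanSingleton_one]

@[simp]
theorem toLinAlgEquiv_basisQuotientSpanSingleton_apply_mk_snd :
    Matrix.toLinAlgEquiv (basisQuotientSpanSingleton hli hsp) A (Submodule.Quotient.mk z) =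
      A 0 1 • Submodule.Quotient.mk x + A 1 1 • Submodule.Quotient.mk z := by
  rw [← basisQuotientSpanSingleton_one hli hsp, Matrix.toLinAlgEquiv_self, Fin.sum_univ_two,
    basisQuotientSpanSingleton_zero, basisQuotientSpanSingleton_one]

end QuotientBasisMatrix

theorem LinearMap.lie_map_of_basis {R L A ι : Type*} [CommRing R] [LieRing L] [LieAlgebra R L]
    [Ring A] [Algebra R A] [LinearOrder ι] (b : Module.Basis ι R L) (f : L →ₗ[R] A)
    (h : ∀ i j, i < j → ⁅f (b i), f (b j)⁆ = f ⁅b i, b j⁆) (X Y : L) :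
    ⁅f X, f Y⁆ = f ⁅X, Y⁆ := by
  have h' (i j : ι) : ⁅f (b i), f (b j)⁆ = f ⁅b i, b j⁆ := by
    rcases lt_trichotomy i j with hij | rfl | hji
    · exact h i j hij
    · rw [Ring.lie_def, sub_self, lie_self, map_zero]
    · rw [← lie_skew, map_neg, ← h j i hji, Ring.lie_def, Ring.lie_def, neg_sub]
  have key : (LinearMap.mul R A).compl₁₂ f f - ((LinearMap.mul R A).compl₁₂ f f).flip =
      (LieModule.toEnd R L L : L →ₗ[R] Module.End R L).compr₂ f :=
    LinearMap.ext_basis b b fun i j => by simpa [Ring.lie_def] using h' i j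
  simpa [Ring.lie_def] using LinearMap.congr_fun₂ key X Y

namespace Stmt6

section Connection

variable {L : Type*} [LieRing L] [LieAlgebra ℝ L] {B : L}
  {Λ : L →ₗ[ℝ] Module.End ℝ (L ⧸ Submodule.span ℝ {B})}

namespace IsFlatTorsionFreeInvariantConnection

theorem lie_apply (h : IsFlatTorsionFreeInvariantConnection B Λ) (X Y : L) :
    ⁅Λ X, Λ Y⁆ = Λ ⁅X, Y⁆ := by
  refine Submodule.linearMap_qext _ (LinearMap.ext fun Z => ?_)
  rw [← sub_eq_zero]
  simpa [Ring.lie_def] using h.2.2.2 X Y Z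

theorem apply_mk_sub_apply_mk (h : IsFlatTorsionFreeInvariantConnection B Λ) (X Y : L) :
    Λ X (Submodule.Quotient.mk Y) - Λ Y (Submodule.Quotient.mk X) = Submodule.Quotient.mk ⁅X, Y⁆ :=
  sub_eq_zero.1 (h.2.2.1 X Y)

end IsFlatTorsionFreeInvariantConnection

theorem isFlatTorsionFreeInvariantConnection_of_orbit (hΛ : ∀ X Y, ⁅Λ X, Λ Y⁆ = Λ ⁅X, Y⁆)
    (v : L ⧸ Submodule.span ℝ {B}) (hv : ∀ X, Λ X v = Submodule.Quotient.mk X) :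
    IsFlatTorsionFreeInvariantConnection B Λ := by
  have flat (X Y : L) (w : L ⧸ Submodule.span ℝ {B}) : Λ X (Λ Y w) - Λ Y (Λ X w) = Λ ⁅X, Y⁆ w := by
    rw [← hΛ, Ring.lie_def]; rfl
  have hB : Λ B v = 0 := by rw [hv, Submodule.Quotient.mk_self_span_singleton]
  have isotropy (Y : L) : Λ B (Submodule.Quotient.mk Y) = Submodule.Quotient.mk ⁅B, Y⁆ := by
    rw [← hv, ← hv, ← flat, hB, map_zero, sub_zero]
  refine ⟨isotropy, fun X Y => ?_, fun X Y => ?_, fun X Y Z => ?_⟩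
  · rw [← isotropy, flat]
  · rw [← hv, ← hv, ← hv, flat, sub_self]
  · rw [flat, sub_self]

end Connection

noncomputable def matrixH : Matrix (Fin 2) (Fin 2) ℝ := !![1 / 2, 0; 0, -1 / 2]

def matrixB : Matrix (Fin 2) (Fin 2) ℝ := !![0, 1; 0, 0]

noncomputable def matrixP : Matrix (Fin 2) (Fin 2) ℝ := !![0, 0; 1 / 2, 0]

theorem lie_matrixH_matrixB : ⁅matrixH, matrixB⁆ = matrixB := by
  ext i j; fin_cases i <;> fin_cases j <;>
    norm_num [matrixB, matrixH, Ring.lie_def, Matrix.mul_apply, Fin.sum_univ_two]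

theorem lie_matrixH_matrixP : ⁅matrixH, matrixP⁆ = -matrixP := by
  ext i j; fin_cases i <;> fin_cases j <;>
    norm_num [matrixH, matrixP, Ring.lie_def, Matrix.mul_apply, Fin.sum_univ_two]

theorem lie_matrixB_matrixP : ⁅matrixB, matrixP⁆ = matrixH := by
  ext i j; fin_cases i <;> fin_cases j <;>
    norm_num [matrixB, matrixH, matrixP, Ring.lie_def, Matrix.mul_apply, Fin.sum_univ_two]

theorem eq_matrixH_and_eq_matrixP {M N : Matrix (Fin 2) (Fin 2) ℝ}
    (hBH : ⁅matrixB, M⁆ = -matrixB) (hBP : ⁅matrixB, N⁆ = M) (hHP : ⁅M, N⁆ = -N)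
    (hT₀ : M 0 1 - N 0 0 = 0) (hT₁ : M 1 1 - N 1 0 = -1) :
    M = matrixH ∧ N = matrixP := by
  obtain ⟨a, b, c, d, rfl⟩ : ∃ a b c d, M = !![a, b; c, d] := ⟨_, _, _, _, M.eta_fin_two⟩
  obtain ⟨e, f, g, k, rfl⟩ : ∃ e f g k, N = !![e, f; g, k] := ⟨_, _, _, _, N.eta_fin_two⟩
  simp only [matrixB, matrixH, matrixP, Ring.lie_def, Matrix.mul_fin_two, Matrix.of_sub_of,
    Matrix.neg_of, Matrix.sub_cons, Matrix.neg_cons, Matrix.empty_eq, Matrix.head_cons,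
    Matrix.tail_cons, EmbeddingLike.apply_eq_iff_eq, Matrix.vecCons_inj, Matrix.of_apply,
    Matrix.cons_val', Matrix.cons_val_zero, Matrix.cons_val_one, Matrix.cons_val_fin_one, and_true,
    true_and, zero_mul, mul_zero, one_mul, mul_one, add_zero, zero_add, sub_zero, zero_sub,
    neg_zero] at *
  obtain ⟨⟨rfl, hda⟩, -⟩ := hBH
  obtain ⟨⟨rfl, hkeb⟩, -, hgd⟩ := hBP
  obtain ⟨⟨hHP₀₀, hHP₀₁⟩, -⟩ := hHP
  obtain rfl : g = 1 / 2 := by linarith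
  obtain rfl : e = 0 := by linarith
  obtain rfl : d = -1 / 2 := by linarith
  obtain rfl : b = 0 := by linarith
  obtain rfl : k = 0 := by linarith
  obtain rfl : f = 0 := by linarith
  norm_num

section LightCone

variable {L : Type*} [LieRing L] [LieAlgebra ℝ L] {H B P : L}
  (hindep : LinearIndependent ℝ ![H, B, P]) (hspan : Submodule.span ℝ {H, B, P} = ⊤)

local notation "bQ" => basisQuotientSpanSingleton hindep hspan

theorem IsFlatTorsionFreeInvariantConnection.toMatrix_eq
    (hHB : ⁅H, B⁆ = B) (hHP : ⁅H, P⁆ = -P) (hBP : ⁅B, P⁆ = H)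
    {Λ : L →ₗ[ℝ] Module.End ℝ (L ⧸ Submodule.span ℝ {B})}
    (h : IsFlatTorsionFreeInvariantConnection B Λ) :
    LinearMap.toMatrixAlgEquiv bQ (Λ H) = matrixH ∧
      LinearMap.toMatrixAlgEquiv bQ (Λ B) = matrixB ∧
      LinearMap.toMatrixAlgEquiv bQ (Λ P) = matrixP := by
  set φ := LinearMap.toMatrixAlgEquiv bQ
  have φ_lie (f g : Module.End ℝ (L ⧸ Submodule.span ℝ {B})) : φ ⁅f, g⁆ = ⁅φ f, φ g⁆ := by
    simp only [Ring.lie_def, map_sub, map_mul]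
  have hBH : ⁅B, H⁆ = -B := by rw [← lie_skew, hHB]
  have hΛB : φ (Λ B) = matrixB := by
    ext i j
    fin_cases i <;> fin_cases j <;>
      simp [φ, matrixB, LinearMap.toMatrixAlgEquiv_apply, h.1, hBH, hBP]
  have hT (i : Fin 2) : φ (Λ H) i 1 - φ (Λ P) i 0 = -Finsupp.single 1 1 i := by
    simp only [φ, LinearMap.toMatrixAlgEquiv_apply, basisQuotientSpanSingleton_zero,
      basisQuotientSpanSingleton_one, ← Finsupp.sub_apply, ← map_sub, h.apply_mk_sub_apply_mk, hHP,
      Submodule.Quotient.mk_neg, map_neg, basisQuotientSpanSingleton_repr_mk_snd, Finsupp.neg_apply]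
  obtain ⟨hH, hP⟩ := eq_matrixH_and_eq_matrixP (M := φ (Λ H)) (N := φ (Λ P))
    (by rw [← hΛB, ← φ_lie, h.lie_apply, hBH, map_neg, map_neg])
    (by rw [← hΛB, ← φ_lie, h.lie_apply, hBP])
    (by rw [← φ_lie, h.lie_apply, hHP, map_neg, map_neg])
    (by simpa using hT 0) (by simpa using hT 1)
  exact ⟨hH, hΛB, hP⟩

noncomputable def lightConeRep : L →ₗ[ℝ] Matrix (Fin 2) (Fin 2) ℝ :=
  (basisOfTriple hindep hspan).constr ℝ ![matrixH, matrixB, matrixP]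

@[simp]
theorem lightConeRep_H : lightConeRep hindep hspan H = matrixH := by
  have h := (basisOfTriple hindep hspan).constr_basis ℝ ![matrixH, matrixB, matrixP] 0
  rwa [coe_basisOfTriple] at h

@[simp]
theorem lightConeRep_B : lightConeRep hindep hspan B = matrixB := by
  have h := (basisOfTriple hindep hspan).constr_basis ℝ ![matrixH, matrixB, matrixP] 1
  rwa [coe_basisOfTriple] at h

@[simp]
theorem lightConeRep_P : lightConeRep hindep hspan P = matrixP := by
  have h := (basisOfTriple hindep hspan).constr_basis ℝ ![matrixH, matrixB, matrixP] 2
  rwa [coe_basisOfTriple] at h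

theorem lightConeRep_lie (hHB : ⁅H, B⁆ = B) (hHP : ⁅H, P⁆ = -P) (hBP : ⁅B, P⁆ = H) (X Y : L) :
    ⁅lightConeRep hindep hspan X, lightConeRep hindep hspan Y⁆ =
      lightConeRep hindep hspan ⁅X, Y⁆ := by
  refine LinearMap.lie_map_of_basis (basisOfTriple hindep hspan) _ (fun i j hij => ?_) X Y
  fin_cases i <;> fin_cases j <;> revert hij <;>
    simp [hHB, hHP, hBP, lie_matrixH_matrixB, lie_matrixH_matrixP, lie_matrixB_matrixP]

noncomputable def lightConeConnection : L →ₗ[ℝ] Module.End ℝ (L ⧸ Submodule.span ℝ {B}) :=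
  (Matrix.toLinAlgEquiv bQ).toLinearMap ∘ₗ lightConeRep hindep hspan

theorem isFlatTorsionFreeInvariantConnection_lightConeConnection
    (hHB : ⁅H, B⁆ = B) (hHP : ⁅H, P⁆ = -P) (hBP : ⁅B, P⁆ = H) :
    IsFlatTorsionFreeInvariantConnection B (lightConeConnection hindep hspan) := by
  refine isFlatTorsionFreeInvariantConnection_of_orbit (fun X Y => ?_) ((2 : ℝ) • bQ 0)
    fun X => ?_
  · simp only [lightConeConnection, LinearMap.coe_comp, Function.comp_apply,
      AlgEquiv.toLinearMap_apply, ← lightConeRep_lie hindep hspan hHB hHP hBP, Ring.lie_def,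
      map_sub, map_mul]
  · suffices (lightConeConnection hindep hspan).flip ((2 : ℝ) • bQ 0) =
        (Submodule.span ℝ {B}).mkQ from LinearMap.congr_fun this X
    refine (basisOfTriple hindep hspan).ext fun i => ?_
    fin_cases i <;> simp [lightConeConnection, matrixH, matrixB, matrixP, smul_smul]

theorem IsFlatTorsionFreeInvariantConnection.eq_lightConeConnection
    (hHB : ⁅H, B⁆ = B) (hHP : ⁅H, P⁆ = -P) (hBP : ⁅B, P⁆ = H)
    {Λ : L →ₗ[ℝ] Module.End ℝ (L ⧸ Submodule.span ℝ {B})}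
    (h : IsFlatTorsionFreeInvariantConnection B Λ) : Λ = lightConeConnection hindep hspan := by
  refine (basisOfTriple hindep hspan).ext fun i => (LinearMap.toMatrixAlgEquiv bQ).injective ?_
  obtain ⟨hH, hB, hP⟩ := h.toMatrix_eq hindep hspan hHB hHP hBP
  fin_cases i <;> simp [lightConeConnection, hH, hB, hP]

end LightCone

end Stmt6

open Stmt6 in
/-- Let `k` be the 3-dimensional real Lie algebra with basis `{H, B, P}` and brackets
`[H,B] = B`, `[H,P] = −P`, `[B,P] = H`, and `h = ℝB`.  There is a UNIQUE invariant
connection on `(k,h)` with vanishing torsion and curvature, namely the one given by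
`Λ_H H̄ = (1/2)H̄`, `Λ_H P̄ = −(1/2)P̄`, `Λ_P H̄ = (1/2)P̄`, `Λ_P P̄ = 0`. -/
theorem stmt6 {L : Type*} [LieRing L] [LieAlgebra ℝ L] (H B P : L)
    (hindep : LinearIndependent ℝ ![H, B, P])
    (hspan : Submodule.span ℝ {H, B, P} = ⊤)
    (hHB : ⁅H, B⁆ = B) (hHP : ⁅H, P⁆ = -P) (hBP : ⁅B, P⁆ = H) :
    (∃! Λ : L →ₗ[ℝ] Module.End ℝ (L ⧸ Submodule.span ℝ {B}),
        IsFlatTorsionFreeInvariantConnection B Λ) ∧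
    (∀ Λ : L →ₗ[ℝ] Module.End ℝ (L ⧸ Submodule.span ℝ {B}),
      IsFlatTorsionFreeInvariantConnection B Λ →
        Λ H (Submodule.Quotient.mk H) = (1 / 2 : ℝ) • Submodule.Quotient.mk H ∧
        Λ H (Submodule.Quotient.mk P) = -((1 / 2 : ℝ) • Submodule.Quotient.mk P) ∧
        Λ P (Submodule.Quotient.mk H) = (1 / 2 : ℝ) • Submodule.Quotient.mk P ∧
        Λ P (Submodule.Quotient.mk P) = 0) := by
  refine ⟨⟨lightConeConnection hindep hspan,
    isFlatTorsionFreeInvariantConnection_lightConeConnection hindep hspan hHB hHP hBP,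
    fun Λ h => h.eq_lightConeConnection hindep hspan hHB hHP hBP⟩, fun Λ h => ?_⟩
  rw [h.eq_lightConeConnection hindep hspan hHB hHP hBP]
  simp [lightConeConnection, matrixH, matrixP, neg_div, neg_smul]
end

section
/- Let D ≥ 1 and γ ∈ ℝ. Let k_γ be the real Lie algebra on so(D) ⊕ ℝ^D ⊕ ℝ^D ⊕ ℝ with basis {J_{ab}, B_a, P_a, H}, nonzero brackets [J_{ab},J_{cd}] = δ_{bc}J_{ad} − δ_{ac}J_{bd} − δ_{bd}J_{ac} + δ_{ad}J_{bc}, [J_{ab},B_c] = δ_{bc}B_a − δ_{ac}B_b, [J_{ab},P_c] = δ_{bc}P_a − δ_{ac}P_b, [H,B_a] = −P_a, [H,P_a] = γB_a + (1+γ)P_a. Set h = span{J_{ab}, B_a} and m = span{P_a, H}. Then (i) k_γ = h ⊕ m with [h,m] ⊆ m (the pair is reductive); (ii) the torsion Θ(X,Y) := −pr_m[X,Y] and curvature Ω(X,Y)Z := −[pr_h[X,Y], Z] (X,Y,Z ∈ m) of the canonical invariant connection are given by Θ(H,P_a) = −(1+γ)P_a, Θ(P_a,P_b) = 0, Ω(H,P_a)H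 = −γP_a, Ω(H,P_a)P_b = 0, Ω(P_a,P_b) = 0; (iii) Θ = 0 if and only if γ = −1, and Ω = 0 if and only if γ = 0. -/
namespace Stmt7

/-- Kronecker delta. -/
def kron {n : ℕ} (a b : Fin n) : ℝ := if a = b then 1 else 0

/-- The family `{J_{ab} (a < b), B_a, P_a, H}`, indexing a basis of a kinematical Lie
algebra. -/
def kinFam {L : Type*} {D : ℕ} (J : Fin D → Fin D → L) (B P : Fin D → L) (H : L) :
    ({p : Fin D × Fin D // p.1 < p.2} ⊕ (Fin D ⊕ (Fin D ⊕ Unit))) → L :=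
  Sum.elim (fun p => J p.1.1 p.1.2) (Sum.elim B (Sum.elim P fun _ => H))

/-- The subalgebra `h` spanned by the `J_{ab}` and the `B_a`. -/
def hSpan {L : Type*} [AddCommGroup L] [Module ℝ L] {D : ℕ}
    (J : Fin D → Fin D → L) (B : Fin D → L) : Submodule ℝ L :=
  Submodule.span ℝ ((Set.range fun p : Fin D × Fin D => J p.1 p.2) ∪ Set.range B)

/-- The complement `m` spanned by the `P_a` and `H`. -/
def mSpan {L : Type*} [AddCommGroup L] [Module ℝ L] {D : ℕ}
    (P : Fin D → L) (H : L) : Submodule ℝ L :=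
  Submodule.span ℝ (Set.range P ∪ {H})

end Stmt7

/-!
The basis splits into the `h`-part `{J_{ab}, B_a}` and the `m`-part `{P_a, H}`, so `h` and `m`
are complementary, and the projections onto them are read off any decomposition `x + y` with
`x ∈ h`, `y ∈ m`. Among the brackets of generators, `[J,P]`, `[J,H]`, `[B,P]`, `[B,H] = P` all
land in `m`, giving reductivity, and the only bracket inside `m` that is not zero is
`[H, P_a] = γ B_a + (1 + γ) P_a`. Its `m`-part gives the torsion and its `h`-part `γ B_a`,
bracketed with `H`, gives the curvature `-γ P_a`; since `P_a ≠ 0` these vanish exactly for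
`γ = -1` and `γ = 0` respectively.
-/

theorem LieAlgebra.lie_mem_of_mem_span {R L : Type*} [CommRing R] [LieRing L] [LieAlgebra R L]
    {s t : Set L} {N : Submodule R L} (h : ∀ x ∈ s, ∀ y ∈ t, ⁅x, y⁆ ∈ N) {X Y : L}
    (hX : X ∈ Submodule.span R s) (hY : Y ∈ Submodule.span R t) : ⁅X, Y⁆ ∈ N :=
  Submodule.map₂_le (f := (LieModule.toEnd R L L : L →ₗ[R] Module.End R L)).mp
    (by
      rw [Submodule.map₂_span_span, Submodule.span_le]
      rintro _ ⟨x, hx, y, hy, rfl⟩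
      exact h x hx y hy)
    X hX Y hY

theorem Submodule.apply_add_eq_of_disjoint {R M : Type*} [Ring R] [AddCommGroup M] [Module R M]
    {p q : Submodule R M} (hpq : Disjoint p q) {f g : M → M} (hf : ∀ z, f z ∈ p)
    (hg : ∀ z, g z ∈ q) (hfg : ∀ z, f z + g z = z) {x y : M} (hx : x ∈ p) (hy : y ∈ q) :
    f (x + y) = x ∧ g (x + y) = y := by
  have hdiff : f (x + y) - x = y - g (x + y) := by
    rw [sub_eq_sub_iff_add_eq_add, hfg, add_comm]
  have hzero : f (x + y) - x = 0 :=
    Submodule.disjoint_def.mp hpq _ (sub_mem (hf _) hx) (hdiff ▸ sub_mem hy (hg _))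
  rw [hzero, eq_comm, sub_eq_zero] at hdiff
  exact ⟨sub_eq_zero.mp hzero, hdiff.symm⟩

namespace Stmt7

variable {L : Type*} [LieRing L] [LieAlgebra ℝ L] {D : ℕ}
  {J : Fin D → Fin D → L} {B P : Fin D → L} {H : L}

theorem B_mem_hSpan (a : Fin D) : B a ∈ hSpan J B :=
  Submodule.subset_span (Or.inr ⟨a, rfl⟩)

theorem P_mem_mSpan (a : Fin D) : P a ∈ mSpan P H :=
  Submodule.subset_span (Or.inl ⟨a, rfl⟩)

theorem H_mem_mSpan : H ∈ mSpan P H :=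
  Submodule.subset_span (Or.inr rfl)

theorem J_self_eq_zero (hJskew : ∀ a b, J a b = -J b a) (a : Fin D) : J a a = 0 :=
  have := IsAddTorsionFree.of_isTorsionFree ℝ L
  self_eq_neg.mp (hJskew a a)

theorem hSpan_eq_span_image (hJskew : ∀ a b, J a b = -J b a) :
    hSpan J B = Submodule.span ℝ (kinFam J B P H '' (Set.range (Sum.inr ∘ Sum.inr))ᶜ) := by
  apply le_antisymm
  · have hJ : ∀ p : {p : Fin D × Fin D // p.1 < p.2},
        J p.1.1 p.1.2 ∈ Submodule.span ℝ (kinFam J B P H '' (Set.range (Sum.inr ∘ Sum.inr))ᶜ) :=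
      fun p => Submodule.subset_span ⟨Sum.inl p, by simp, rfl⟩
    rw [hSpan, Submodule.span_le]
    rintro _ (⟨⟨a, b⟩, rfl⟩ | ⟨a, rfl⟩)
    · rcases lt_trichotomy a b with h | rfl | h
      · exact hJ ⟨(a, b), h⟩
      · simp [J_self_eq_zero hJskew]
      · change J a b ∈ _
        rw [hJskew]
        exact neg_mem (hJ ⟨(b, a), h⟩)
    · exact Submodule.subset_span ⟨Sum.inr (Sum.inl a), by simp, rfl⟩
  · rw [Submodule.span_le]
    rintro _ ⟨p | a | i, hi, rfl⟩
    · exact Submodule.subset_span (Or.inl ⟨p.1, rfl⟩)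
    · exact Submodule.subset_span (Or.inr ⟨a, rfl⟩)
    · exact absurd ⟨i, rfl⟩ hi

theorem mSpan_eq_span_image :
    mSpan P H = Submodule.span ℝ (kinFam J B P H '' Set.range (Sum.inr ∘ Sum.inr)) := by
  rw [← Set.range_comp, mSpan]
  congr 1
  simp [kinFam, Function.comp_def, Set.Sum.elim_range]

theorem isCompl_hSpan_mSpan (hJskew : ∀ a b, J a b = -J b a)
    (hindep : LinearIndependent ℝ (kinFam J B P H))
    (hspan : Submodule.span ℝ (Set.range (kinFam J B P H)) = ⊤) :
    IsCompl (hSpan J B) (mSpan P H) := by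
  rw [hSpan_eq_span_image (P := P) (H := H) hJskew, mSpan_eq_span_image (J := J) (B := B)]
  exact hindep.isCompl_span_image hspan isCompl_compl.symm

theorem lie_mem_mSpan_of_mem_hSpan (hJP : ∀ a b c, ⁅J a b, P c⁆ = kron b c • P a - kron a c • P b)
    (hJH : ∀ a b, ⁅J a b, H⁆ = 0) (hBP : ∀ a b, ⁅B a, P b⁆ = 0) (hHB : ∀ a, ⁅H, B a⁆ = -P a)
    {X Y : L} (hX : X ∈ hSpan J B) (hY : Y ∈ mSpan P H) : ⁅X, Y⁆ ∈ mSpan P H := by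
  refine LieAlgebra.lie_mem_of_mem_span ?_ hX hY
  rintro _ (⟨⟨a, b⟩, rfl⟩ | ⟨a, rfl⟩) _ (⟨c, rfl⟩ | rfl)
  · rw [hJP]
    exact sub_mem (Submodule.smul_mem _ _ (P_mem_mSpan a)) (Submodule.smul_mem _ _ (P_mem_mSpan b))
  · rw [hJH]
    exact zero_mem _
  · rw [hBP]
    exact zero_mem _
  · rw [← lie_skew, hHB, neg_neg]
    exact P_mem_mSpan a

theorem lie_mem_of_mem_mSpan {N : Submodule ℝ L} (hPP : ∀ a b, ⁅P a, P b⁆ = 0)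
    (hHP : ∀ a, ⁅H, P a⁆ ∈ N) {X Y : L} (hX : X ∈ mSpan P H) (hY : Y ∈ mSpan P H) :
    ⁅X, Y⁆ ∈ N := by
  refine LieAlgebra.lie_mem_of_mem_span ?_ hX hY
  rintro _ (⟨a, rfl⟩ | rfl) _ (⟨b, rfl⟩ | rfl)
  · rw [hPP]
    exact zero_mem _
  · rw [← lie_skew]
    exact neg_mem (hHP a)
  · exact hHP b
  · rw [lie_self]
    exact zero_mem _

theorem proj_lie_H_P {γ : ℝ} (hHP : ∀ a, ⁅H, P a⁆ = γ • B a + (1 + γ) • P a)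
    (hhm : Disjoint (hSpan J B) (mSpan P H)) {prh prm : L → L} (hprh : ∀ X, prh X ∈ hSpan J B)
    (hprm : ∀ X, prm X ∈ mSpan P H) (hsum : ∀ X, prh X + prm X = X) (a : Fin D) :
    prh ⁅H, P a⁆ = γ • B a ∧ prm ⁅H, P a⁆ = (1 + γ) • P a := by
  rw [hHP]
  exact Submodule.apply_add_eq_of_disjoint hhm hprh hprm hsum
    (Submodule.smul_mem _ _ (B_mem_hSpan a)) (Submodule.smul_mem _ _ (P_mem_mSpan a))

end Stmt7

open Stmt7 in
theorem stmt7_general {D : ℕ} (hD : 1 ≤ D) (γ : ℝ) {L : Type*} [LieRing L] [LieAlgebra ℝ L]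
    (J : Fin D → Fin D → L) (B P : Fin D → L) (H : L)
    (hJskew : ∀ a b, J a b = -J b a)
    (hindep : LinearIndependent ℝ (kinFam J B P H))
    (hspan : Submodule.span ℝ (Set.range (kinFam J B P H)) = ⊤)
    (hJP : ∀ a b c, ⁅J a b, P c⁆ = kron b c • P a - kron a c • P b)
    (hJH : ∀ a b, ⁅J a b, H⁆ = 0)
    (hHB : ∀ a, ⁅H, B a⁆ = -P a)
    (hHP : ∀ a, ⁅H, P a⁆ = γ • B a + (1 + γ) • P a)
    (hPP : ∀ a b, ⁅P a, P b⁆ = 0)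
    (hBP : ∀ a b, ⁅B a, P b⁆ = 0) :
    (IsCompl (hSpan J B) (mSpan P H) ∧
      ∀ X ∈ hSpan J B, ∀ Y ∈ mSpan P H, ⁅X, Y⁆ ∈ mSpan P H) ∧
    (∀ prh prm : L →ₗ[ℝ] L,
      (∀ X, prh X ∈ hSpan J B) → (∀ X, prm X ∈ mSpan P H) → (∀ X, prh X + prm X = X) →
        ((∀ a, -prm ⁅H, P a⁆ = (-(1 + γ)) • P a) ∧
         (∀ a b, -prm ⁅P a, P b⁆ = 0) ∧
         (∀ a, -⁅prh ⁅H, P a⁆, H⁆ = (-γ) • P a) ∧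
         (∀ a b, -⁅prh ⁅H, P a⁆, P b⁆ = 0) ∧
         (∀ a b, ∀ Z ∈ mSpan P H, -⁅prh ⁅P a, P b⁆, Z⁆ = 0) ∧
         ((∀ X ∈ mSpan P H, ∀ Y ∈ mSpan P H, prm ⁅X, Y⁆ = 0) ↔ γ = -1) ∧
         ((∀ X ∈ mSpan P H, ∀ Y ∈ mSpan P H, ∀ Z ∈ mSpan P H, ⁅prh ⁅X, Y⁆, Z⁆ = 0) ↔
            γ = 0))) := by
  have hBH : ∀ a, ⁅B a, H⁆ = P a := fun a => by rw [← lie_skew, hHB, neg_neg]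
  have hP₀ : P ⟨0, hD⟩ ≠ 0 := hindep.ne_zero (Sum.inr (Sum.inr (Sum.inl _)))
  have hcompl := isCompl_hSpan_mSpan hJskew hindep hspan
  refine ⟨⟨hcompl, fun X hX Y hY => lie_mem_mSpan_of_mem_hSpan hJP hJH hBP hHB hX hY⟩, ?_⟩
  intro prh prm hprh hprm hsum
  have hsplit {x y : L} (hx : x ∈ hSpan J B) (hy : y ∈ mSpan P H) :=
    Submodule.apply_add_eq_of_disjoint hcompl.disjoint hprh hprm hsum hx hy
  have hprhHP a := (proj_lie_H_P hHP hcompl.disjoint hprh hprm hsum a).1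
  have hprmHP a := (proj_lie_H_P hHP hcompl.disjoint hprh hprm hsum a).2
  refine ⟨fun a => by rw [hprmHP, neg_smul], fun a b => by rw [hPP, map_zero, neg_zero],
    fun a => by rw [hprhHP, smul_lie, hBH, neg_smul],
    fun a b => by rw [hprhHP, smul_lie, hBP, smul_zero, neg_zero],
    fun a b Z _ => by rw [hPP, map_zero, zero_lie, neg_zero], ⟨fun h => ?_, ?_⟩, ⟨fun h => ?_, ?_⟩⟩
  · have h₀ := h H H_mem_mSpan _ (P_mem_mSpan ⟨0, hD⟩)
    rw [hprmHP, smul_eq_zero_iff_left hP₀] at h₀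
    linarith
  · rintro rfl X hX Y hY
    have hHP_mem a : ⁅H, P a⁆ ∈ hSpan J B := by simpa [hHP] using neg_mem (B_mem_hSpan (J := J) a)
    have hXY : ⁅X, Y⁆ ∈ hSpan J B := lie_mem_of_mem_mSpan hPP hHP_mem hX hY
    simpa using (hsplit hXY (zero_mem _)).2
  · have h₀ := h H H_mem_mSpan _ (P_mem_mSpan ⟨0, hD⟩) H H_mem_mSpan
    rwa [hprhHP, smul_lie, hBH, smul_eq_zero_iff_left hP₀] at h₀
  · rintro rfl X hX Y hY Z _
    have hHP_mem a : ⁅H, P a⁆ ∈ mSpan P H := by simpa [hHP] using P_mem_mSpan (H := H) a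
    have hXY : ⁅X, Y⁆ ∈ mSpan P H := lie_mem_of_mem_mSpan hPP hHP_mem hX hY
    have hprh : prh ⁅X, Y⁆ = 0 := by simpa using (hsplit (zero_mem _) hXY).1
    rw [hprh, zero_lie]

open Stmt7 in
/-- Let `k_γ` be the Lie algebra of the torsional galilean de Sitter spacetime `dSG_γ`, with
basis `{J_{ab}, B_a, P_a, H}` and nonzero brackets `[J,J]`, `[J,B]`, `[J,P]` as usual and
`[H,B_a] = −P_a`, `[H,P_a] = γB_a + (1+γ)P_a`; set `h = span{J_{ab}, B_a}` and
`m = span{P_a, H}`.  Then (i) `k_γ = h ⊕ m` with `[h,m] ⊆ m` (the pair is reductive);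
(ii) the torsion `Θ(X,Y) = −pr_m[X,Y]` and curvature `Ω(X,Y)Z = −[pr_h[X,Y],Z]` of the
canonical invariant connection satisfy `Θ(H,P_a) = −(1+γ)P_a`, `Θ(P_a,P_b) = 0`,
`Ω(H,P_a)H = −γP_a`, `Ω(H,P_a)P_b = 0`, `Ω(P_a,P_b) = 0`; and (iii) `Θ = 0` iff `γ = −1`
and `Ω = 0` iff `γ = 0`. -/
theorem stmt7 {D : ℕ} (hD : 1 ≤ D) (γ : ℝ) {L : Type*} [LieRing L] [LieAlgebra ℝ L]
    (J : Fin D → Fin D → L) (B P : Fin D → L) (H : L)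
    (hJskew : ∀ a b, J a b = -J b a)
    (hindep : LinearIndependent ℝ (kinFam J B P H))
    (hspan : Submodule.span ℝ (Set.range (kinFam J B P H)) = ⊤)
    (hJJ : ∀ a b c d, ⁅J a b, J c d⁆ =
        kron b c • J a d - kron a c • J b d - kron b d • J a c + kron a d • J b c)
    (hJB : ∀ a b c, ⁅J a b, B c⁆ = kron b c • B a - kron a c • B b)
    (hJP : ∀ a b c, ⁅J a b, P c⁆ = kron b c • P a - kron a c • P b)
    (hJH : ∀ a b, ⁅J a b, H⁆ = 0)
    (hHB : ∀ a, ⁅H, B a⁆ = -P a)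
    (hHP : ∀ a, ⁅H, P a⁆ = γ • B a + (1 + γ) • P a)
    (hBB : ∀ a b, ⁅B a, B b⁆ = 0)
    (hPP : ∀ a b, ⁅P a, P b⁆ = 0)
    (hBP : ∀ a b, ⁅B a, P b⁆ = 0) :
    (IsCompl (hSpan J B) (mSpan P H) ∧
      ∀ X ∈ hSpan J B, ∀ Y ∈ mSpan P H, ⁅X, Y⁆ ∈ mSpan P H) ∧
    (∀ prh prm : L →ₗ[ℝ] L,
      (∀ X, prh X ∈ hSpan J B) → (∀ X, prm X ∈ mSpan P H) → (∀ X, prh X + prm X = X) →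
        ((∀ a, -prm ⁅H, P a⁆ = (-(1 + γ)) • P a) ∧
         (∀ a b, -prm ⁅P a, P b⁆ = 0) ∧
         (∀ a, -⁅prh ⁅H, P a⁆, H⁆ = (-γ) • P a) ∧
         (∀ a b, -⁅prh ⁅H, P a⁆, P b⁆ = 0) ∧
         (∀ a b, ∀ Z ∈ mSpan P H, -⁅prh ⁅P a, P b⁆, Z⁆ = 0) ∧
         ((∀ X ∈ mSpan P H, ∀ Y ∈ mSpan P H, prm ⁅X, Y⁆ = 0) ↔ γ = -1) ∧
         ((∀ X ∈ mSpan P H, ∀ Y ∈ mSpan P H, ∀ Z ∈ mSpan P H, ⁅prh ⁅X, Y⁆, Z⁆ = 0) ↔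
            γ = 0))) :=
  stmt7_general hD γ J B P H hJskew hindep hspan hJP hJH hHB hHP hPP hBP
end

section
/- Let D ≥ 1 and χ ∈ ℝ. Let k_χ be the real Lie algebra on so(D) ⊕ ℝ^D ⊕ ℝ^D ⊕ ℝ with basis {J_{ab}, B_a, P_a, H}, nonzero brackets [J_{ab},J_{cd}] = δ_{bc}J_{ad} − δ_{ac}J_{bd} − δ_{bd}J_{ac} + δ_{ad}J_{bc}, [J_{ab},B_c] = δ_{bc}B_a − δ_{ac}B_b, [J_{ab},P_c] = δ_{bc}P_a − δ_{ac}P_b, [H,B_a] = −P_a, [H,P_a] = (1+χ²)B_a + 2χP_a. Set h = span{J_{ab}, B_a} and m = span{P_a, H}. Then (i) k_χ = h ⊕ m with [h,m] ⊆ m; (ii) the torsion and curvature of the canonical invariant connection are Θ(H,P_a) = −2χP_a, Θ(P_a,P_b) = 0, Ω(H,P_a)H = −(1+χ²)P_a, Ω(H,P_a)P_b = 0, Ω(P_a,P_b) = 0; (iii) Θ = 0 if and only if χ = 0, while Ω ≠ 0 for every χ ∈ ℝ (the canonical connection is never flat). -/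
/-!
`h` and `m` are spanned by complementary parts of a basis, so `k_χ = h ⊕ m`, and the projections
`pr_h`, `pr_m` are forced by this decomposition. All torsion and curvature components then come
from the one bracket `[H, P_a] = (1 + χ²) B_a + 2χ P_a`, which is the only bracket of two elements
of `m` that is not zero: its `m`-part `2χ P_a` is the torsion, vanishing exactly when `χ = 0`,
and its `h`-part `(1 + χ²) B_a` acts on `H` by `−(1 + χ²) P_a ≠ 0`, so the curvature never
vanishes.
-/

namespace Stmt8

/-- Kronecker delta. -/
def kron {n : ℕ} (a b : Fin n) : ℝ := if a = b then 1 else 0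

/-- The family `{J_{ab} (a < b), B_a, P_a, H}`, indexing a basis of a kinematical Lie
algebra. -/
def kinFam {L : Type*} {D : ℕ} (J : Fin D → Fin D → L) (B P : Fin D → L) (H : L) :
    ({p : Fin D × Fin D // p.1 < p.2} ⊕ (Fin D ⊕ (Fin D ⊕ Unit))) → L :=
  Sum.elim (fun p => J p.1.1 p.1.2) (Sum.elim B (Sum.elim P fun _ => H))

/-- The subalgebra `h` spanned by the `J_{ab}` and the `B_a`. -/
def hSpan {L : Type*} [AddCommGroup L] [Module ℝ L] {D : ℕ}
    (J : Fin D → Fin D → L) (B : Fin D → L) : Submodule ℝ L :=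
  Submodule.span ℝ ((Set.range fun p : Fin D × Fin D => J p.1 p.2) ∪ Set.range B)

/-- The complement `m` spanned by the `P_a` and `H`. -/
def mSpan {L : Type*} [AddCommGroup L] [Module ℝ L] {D : ℕ}
    (P : Fin D → L) (H : L) : Submodule ℝ L :=
  Submodule.span ℝ (Set.range P ∪ {H})

end Stmt8

lemma lie_mem_of_mem_span_of_mem_span {R L : Type*} [CommRing R] [LieRing L] [LieAlgebra R L]
    {s t : Set L} {N : Submodule R L} (h : ∀ x ∈ s, ∀ y ∈ t, ⁅x, y⁆ ∈ N) :
    ∀ X ∈ Submodule.span R s, ∀ Y ∈ Submodule.span R t, ⁅X, Y⁆ ∈ N := by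
  have hmap : Submodule.map₂ (LieModule.toEnd R L L : L →ₗ[R] Module.End R L)
      (Submodule.span R s) (Submodule.span R t) ≤ N := by
    rw [Submodule.map₂_span_span, Submodule.span_le]
    exact Set.image2_subset_iff.mpr h
  exact Submodule.map₂_le.mp hmap

lemma span_range_eq_span_range_lt {ι R M : Type*} [LinearOrder ι] [Ring R] [AddCommGroup M]
    [IsAddTorsionFree M] [Module R M] {J : ι → ι → M} (hJ : ∀ a b, J a b = -J b a) :
    Submodule.span R (Set.range fun p : ι × ι => J p.1 p.2) =
      Submodule.span R (Set.range fun p : {p : ι × ι // p.1 < p.2} => J p.1.1 p.1.2) := by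
  refine le_antisymm (Submodule.span_le.mpr ?_) (Submodule.span_mono ?_)
  · rintro _ ⟨⟨a, b⟩, rfl⟩
    rcases lt_trichotomy a b with hab | rfl | hab
    · exact Submodule.subset_span ⟨⟨(a, b), hab⟩, rfl⟩
    · simp [self_eq_neg.mp (hJ a a)]
    · change J a b ∈ _
      rw [hJ]
      exact neg_mem (Submodule.subset_span ⟨⟨(b, a), hab⟩, rfl⟩)
  · rintro _ ⟨p, rfl⟩
    exact ⟨p.1, rfl⟩

lemma Submodule.proj_apply_add_of_disjoint {R M : Type*} [Ring R] [AddCommGroup M] [Module R M]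
    {p q : Submodule R M} (hpq : Disjoint p q) {prp prq : M → M} (hp : ∀ X, prp X ∈ p)
    (hq : ∀ X, prq X ∈ q) (hsum : ∀ X, prp X + prq X = X) {x y : M} (hx : x ∈ p) (hy : y ∈ q) :
    prp (x + y) = x ∧ prq (x + y) = y := by
  have hdiff : prp (x + y) - x = y - prq (x + y) := by
    rw [sub_eq_sub_iff_add_eq_add, hsum, add_comm]
  have hzero : prp (x + y) - x = 0 :=
    Submodule.disjoint_def.mp hpq _ (sub_mem (hp _) hx) (hdiff ▸ sub_mem hy (hq _))
  rw [hzero, eq_comm, sub_eq_zero] at hdiff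
  exact ⟨sub_eq_zero.mp hzero, hdiff.symm⟩

namespace Stmt8

section KinematicalAlgebra

variable {L : Type*} [LieRing L] [LieAlgebra ℝ L] {D : ℕ}
  {J : Fin D → Fin D → L} {B P : Fin D → L} {H : L}

abbrev hIndex (D : ℕ) : Set ({p : Fin D × Fin D // p.1 < p.2} ⊕ (Fin D ⊕ (Fin D ⊕ Unit))) :=
  Set.range Sum.inl ∪ Set.range (Sum.inr ∘ Sum.inl)

abbrev mIndex (D : ℕ) : Set ({p : Fin D × Fin D // p.1 < p.2} ⊕ (Fin D ⊕ (Fin D ⊕ Unit))) :=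
  Set.range (Sum.inr ∘ Sum.inr)

lemma isCompl_hIndex_mIndex : IsCompl (hIndex D) (mIndex D) := by
  constructor
  · rw [Set.disjoint_left]
    rintro _ (⟨_, rfl⟩ | ⟨_, rfl⟩) ⟨_, h⟩ <;> simp at h
  · rw [codisjoint_iff]
    ext (p | a | x) <;> simp

lemma hSpan_eq_span_image (hJ : ∀ a b, J a b = -J b a) :
    hSpan J B = Submodule.span ℝ (kinFam J B P H '' hIndex D) := by
  have := IsAddTorsionFree.of_isTorsionFree ℝ L
  simp only [hSpan, Set.image_union, ← Set.range_comp, Submodule.span_union,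
    span_range_eq_span_range_lt (R := ℝ) hJ]
  rfl

lemma mSpan_eq_span_image : mSpan P H = Submodule.span ℝ (kinFam J B P H '' mIndex D) := by
  simp only [mSpan, ← Set.range_comp]
  simp [kinFam, Function.comp_def, Set.Sum.elim_range]

lemma isCompl_hSpan_mSpan (hJ : ∀ a b, J a b = -J b a)
    (hindep : LinearIndependent ℝ (kinFam J B P H))
    (hspan : Submodule.span ℝ (Set.range (kinFam J B P H)) = ⊤) :
    IsCompl (hSpan J B) (mSpan P H) := by
  rw [hSpan_eq_span_image (P := P) (H := H) hJ, mSpan_eq_span_image (J := J) (B := B)]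
  exact hindep.isCompl_span_image hspan isCompl_hIndex_mIndex

lemma B_mem_hSpan (a : Fin D) : B a ∈ hSpan J B :=
  Submodule.subset_span (Or.inr ⟨a, rfl⟩)

lemma P_mem_mSpan (a : Fin D) : P a ∈ mSpan P H :=
  Submodule.subset_span (Or.inl ⟨a, rfl⟩)

lemma H_mem_mSpan : H ∈ mSpan P H :=
  Submodule.subset_span (Or.inr rfl)

lemma lie_hSpan_mSpan_mem_mSpan
    (hJP : ∀ a b c, ⁅J a b, P c⁆ = kron b c • P a - kron a c • P b)
    (hJH : ∀ a b, ⁅J a b, H⁆ = 0) (hHB : ∀ a, ⁅H, B a⁆ = -P a) (hBP : ∀ a b, ⁅B a, P b⁆ = 0) :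
    ∀ X ∈ hSpan J B, ∀ Y ∈ mSpan P H, ⁅X, Y⁆ ∈ mSpan P H := by
  apply lie_mem_of_mem_span_of_mem_span
  rintro _ (⟨⟨a, b⟩, rfl⟩ | ⟨a, rfl⟩) _ (⟨c, rfl⟩ | rfl)
  · rw [hJP]
    exact sub_mem (Submodule.smul_mem _ _ (P_mem_mSpan a)) (Submodule.smul_mem _ _ (P_mem_mSpan b))
  · simp [hJH]
  · simp [hBP]
  · rw [← lie_skew, hHB, neg_neg]
    exact P_mem_mSpan a

lemma lie_mSpan_mSpan_mem_hSpan (hPP : ∀ a b, ⁅P a, P b⁆ = 0)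
    (hHP : ∀ a, ⁅H, P a⁆ ∈ hSpan J B) :
    ∀ X ∈ mSpan P H, ∀ Y ∈ mSpan P H, ⁅X, Y⁆ ∈ hSpan J B := by
  apply lie_mem_of_mem_span_of_mem_span
  rintro _ (⟨a, rfl⟩ | rfl) _ (⟨b, rfl⟩ | rfl)
  · simp [hPP]
  · rw [← lie_skew]
    exact neg_mem (hHP a)
  · exact hHP b
  · simp

end KinematicalAlgebra

end Stmt8

open Stmt8 in
theorem stmt8_general {D : ℕ} (hD : 1 ≤ D) (χ : ℝ) {L : Type*} [LieRing L] [LieAlgebra ℝ L]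
    (J : Fin D → Fin D → L) (B P : Fin D → L) (H : L)
    (hJskew : ∀ a b, J a b = -J b a)
    (hindep : LinearIndependent ℝ (kinFam J B P H))
    (hspan : Submodule.span ℝ (Set.range (kinFam J B P H)) = ⊤)
    (hJP : ∀ a b c, ⁅J a b, P c⁆ = kron b c • P a - kron a c • P b)
    (hJH : ∀ a b, ⁅J a b, H⁆ = 0)
    (hHB : ∀ a, ⁅H, B a⁆ = -P a)
    (hHP : ∀ a, ⁅H, P a⁆ = (1 + χ ^ 2) • B a + (2 * χ) • P a)
    (hPP : ∀ a b, ⁅P a, P b⁆ = 0)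
    (hBP : ∀ a b, ⁅B a, P b⁆ = 0) :
    (IsCompl (hSpan J B) (mSpan P H) ∧
      ∀ X ∈ hSpan J B, ∀ Y ∈ mSpan P H, ⁅X, Y⁆ ∈ mSpan P H) ∧
    (∀ prh prm : L →ₗ[ℝ] L,
      (∀ X, prh X ∈ hSpan J B) → (∀ X, prm X ∈ mSpan P H) → (∀ X, prh X + prm X = X) →
        ((∀ a, -prm ⁅H, P a⁆ = (-(2 * χ)) • P a) ∧
         (∀ a b, -prm ⁅P a, P b⁆ = 0) ∧
         (∀ a, -⁅prh ⁅H, P a⁆, H⁆ = (-(1 + χ ^ 2)) • P a) ∧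
         (∀ a b, -⁅prh ⁅H, P a⁆, P b⁆ = 0) ∧
         (∀ a b, ∀ Z ∈ mSpan P H, -⁅prh ⁅P a, P b⁆, Z⁆ = 0) ∧
         ((∀ X ∈ mSpan P H, ∀ Y ∈ mSpan P H, prm ⁅X, Y⁆ = 0) ↔ χ = 0) ∧
         ¬(∀ X ∈ mSpan P H, ∀ Y ∈ mSpan P H, ∀ Z ∈ mSpan P H, ⁅prh ⁅X, Y⁆, Z⁆ = 0))) := by
  have hcompl := isCompl_hSpan_mSpan hJskew hindep hspan
  refine ⟨⟨hcompl, lie_hSpan_mSpan_mem_mSpan hJP hJH hHB hBP⟩, ?_⟩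
  intro prh prm hprh hprm hsum
  have hproj {x y : L} (hx : x ∈ hSpan J B) (hy : y ∈ mSpan P H) :
      prh (x + y) = x ∧ prm (x + y) = y :=
    Submodule.proj_apply_add_of_disjoint hcompl.disjoint hprh hprm hsum hx hy
  have hHP_proj (a : Fin D) :
      prh ⁅H, P a⁆ = (1 + χ ^ 2) • B a ∧ prm ⁅H, P a⁆ = (2 * χ) • P a := by
    rw [hHP]
    exact hproj (Submodule.smul_mem _ _ (B_mem_hSpan a)) (Submodule.smul_mem _ _ (P_mem_mSpan a))
  have a₀ : Fin D := ⟨0, hD⟩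
  have hPa₀ : P a₀ ≠ 0 := hindep.ne_zero (Sum.inr (Sum.inr (Sum.inl a₀)))
  refine ⟨fun a => by rw [(hHP_proj a).2, neg_smul], by simp [hPP], fun a => ?_,
    fun a b => by simp [(hHP_proj a).1, hBP], by simp [hPP], ⟨fun htf => ?_, ?_⟩, fun hflat => ?_⟩
  · rw [(hHP_proj a).1, smul_lie, ← lie_skew, hHB, neg_neg, neg_smul]
  · have := htf H H_mem_mSpan (P a₀) (P_mem_mSpan a₀)
    rw [(hHP_proj a₀).2, smul_eq_zero] at this
    exact this.resolve_right hPa₀ |> mul_eq_zero.mp |>.resolve_left two_ne_zero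
  · rintro rfl X hX Y hY
    have hHP_mem (a : Fin D) : ⁅H, P a⁆ ∈ hSpan J B := by
      simpa [hHP] using B_mem_hSpan (J := J) a
    have hXY := lie_mSpan_mSpan_mem_hSpan hPP hHP_mem X hX Y hY
    simpa using (hproj hXY (zero_mem _)).2
  · have := hflat H H_mem_mSpan (P a₀) (P_mem_mSpan a₀) H H_mem_mSpan
    rw [(hHP_proj a₀).1, smul_lie, ← lie_skew, hHB, neg_neg, smul_eq_zero] at this
    exact this.elim (fun h => by nlinarith [sq_nonneg χ]) hPa₀

open Stmt8 in
/-- Let `k_χ` be the Lie algebra of the torsional galilean anti de Sitter spacetime `AdSG_χ`,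
with basis `{J_{ab}, B_a, P_a, H}` and nonzero brackets `[J,J]`, `[J,B]`, `[J,P]` as usual and
`[H,B_a] = −P_a`, `[H,P_a] = (1+χ²)B_a + 2χP_a`; set `h = span{J_{ab}, B_a}` and
`m = span{P_a, H}`.  Then (i) `k_χ = h ⊕ m` with `[h,m] ⊆ m`; (ii) the torsion and curvature
of the canonical invariant connection satisfy `Θ(H,P_a) = −2χP_a`, `Θ(P_a,P_b) = 0`,
`Ω(H,P_a)H = −(1+χ²)P_a`, `Ω(H,P_a)P_b = 0`, `Ω(P_a,P_b) = 0`; and (iii) `Θ = 0` iff `χ = 0`,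
while `Ω ≠ 0` for every `χ` (the canonical connection is never flat). -/
theorem stmt8 {D : ℕ} (hD : 1 ≤ D) (χ : ℝ) {L : Type*} [LieRing L] [LieAlgebra ℝ L]
    (J : Fin D → Fin D → L) (B P : Fin D → L) (H : L)
    (hJskew : ∀ a b, J a b = -J b a)
    (hindep : LinearIndependent ℝ (kinFam J B P H))
    (hspan : Submodule.span ℝ (Set.range (kinFam J B P H)) = ⊤)
    (hJJ : ∀ a b c d, ⁅J a b, J c d⁆ =
        kron b c • J a d - kron a c • J b d - kron b d • J a c + kron a d • J b c)
    (hJB : ∀ a b c, ⁅J a b, B c⁆ = kron b c • B a - kron a c • B b)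
    (hJP : ∀ a b c, ⁅J a b, P c⁆ = kron b c • P a - kron a c • P b)
    (hJH : ∀ a b, ⁅J a b, H⁆ = 0)
    (hHB : ∀ a, ⁅H, B a⁆ = -P a)
    (hHP : ∀ a, ⁅H, P a⁆ = (1 + χ ^ 2) • B a + (2 * χ) • P a)
    (hBB : ∀ a b, ⁅B a, B b⁆ = 0)
    (hPP : ∀ a b, ⁅P a, P b⁆ = 0)
    (hBP : ∀ a b, ⁅B a, P b⁆ = 0) :
    (IsCompl (hSpan J B) (mSpan P H) ∧
      ∀ X ∈ hSpan J B, ∀ Y ∈ mSpan P H, ⁅X, Y⁆ ∈ mSpan P H) ∧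
    (∀ prh prm : L →ₗ[ℝ] L,
      (∀ X, prh X ∈ hSpan J B) → (∀ X, prm X ∈ mSpan P H) → (∀ X, prh X + prm X = X) →
        ((∀ a, -prm ⁅H, P a⁆ = (-(2 * χ)) • P a) ∧
         (∀ a b, -prm ⁅P a, P b⁆ = 0) ∧
         (∀ a, -⁅prh ⁅H, P a⁆, H⁆ = (-(1 + χ ^ 2)) • P a) ∧
         (∀ a b, -⁅prh ⁅H, P a⁆, P b⁆ = 0) ∧
         (∀ a b, ∀ Z ∈ mSpan P H, -⁅prh ⁅P a, P b⁆, Z⁆ = 0) ∧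
         ((∀ X ∈ mSpan P H, ∀ Y ∈ mSpan P H, prm ⁅X, Y⁆ = 0) ↔ χ = 0) ∧
         ¬(∀ X ∈ mSpan P H, ∀ Y ∈ mSpan P H, ∀ Z ∈ mSpan P H, ⁅prh ⁅X, Y⁆, Z⁆ = 0))) :=
  stmt8_general hD χ J B P H hJskew hindep hspan hJP hJH hHB hHP hPP hBP
end

section
/- Let D ≥ 1 and let V = so(D) ⊕ ℝ^D ⊕ ℝ^D ⊕ ℝ with elements written A + B_u + P_v + cH. Let [·,·] be the bracket of the light-cone presentation of so(D+1,1) on V: [A,A'] = AA' − A'A, [A,B_v] = B_{Av}, [A,P_v] = P_{Av}, [A,H] = 0, [H,B_v] = B_v, [H,P_v] = −P_v, [B_u,P_v] = ⟨u,v⟩H + (uvᵀ − vuᵀ), all other brackets of generators zero. For t ∈ (0,1] define g_t ∈ GL(V) by g_t A = A, g_t B_v = B_v, g_t P_v = tP_v, g_t H = tH, and [X,Y]_t := g_t^{-1}[g_t X, g_t Y]. Then [H,B_v]_t = tB_v, [H,P_v]_t = −tP_v, [B_u,P_v]_t = ⟨u,v⟩H + t(uvᵀ − vuᵀ), and for every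 X, Y ∈ V the limit lim_{t→0⁺}[X,Y]_t exists and equals the Carroll bracket, whose only nonzero brackets of generators are [A,A'] = AA' − A'A, [A,B_v] = B_{Av}, [A,P_v] = P_{Av}, and [B_u,P_v] = ⟨u,v⟩H. In particular, the Carroll Lie algebra is a contraction of so(D+1,1), corresponding to the limit from the light-cone spacetime LC to the carrollian spacetime C. -/
open Matrix

noncomputable section

namespace Stmt11

/-- `so(D)`: the real skew-symmetric `D × D` matrices. -/
def soD (D : ℕ) : Submodule ℝ (Matrix (Fin D) (Fin D) ℝ) where
  carrier := {M | Mᵀ = -M}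
  add_mem' := fun {a b} ha hb => by
    simp only [Set.mem_setOf_eq] at ha hb ⊢
    rw [Matrix.transpose_add, ha, hb, neg_add]
  zero_mem' := by simp only [Set.mem_setOf_eq, Matrix.transpose_zero, neg_zero]
  smul_mem' := fun c a ha => by
    simp only [Set.mem_setOf_eq] at ha ⊢
    rw [Matrix.transpose_smul, ha, smul_neg]

theorem mem_soD {D : ℕ} {M : Matrix (Fin D) (Fin D) ℝ} : M ∈ soD D ↔ Mᵀ = -M := Iff.rfl

/-- The commutator `AA' − A'A` of two skew-symmetric matrices, as an element of `so(D)`. -/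
def soComm {D : ℕ} (A B : soD D) : soD D :=
  ⟨A.val * B.val - B.val * A.val, by
    have hA : (A.val)ᵀ = -A.val := A.2
    have hB : (B.val)ᵀ = -B.val := B.2
    rw [mem_soD, Matrix.transpose_sub, Matrix.transpose_mul, Matrix.transpose_mul, hA, hB,
      neg_mul_neg, neg_mul_neg, neg_sub]⟩

/-- `uvᵀ − vuᵀ` as an element of `so(D)`. -/
def outer {D : ℕ} (u v : Fin D → ℝ) : soD D :=
  ⟨vecMulVec u v - vecMulVec v u, by
    rw [mem_soD]
    ext i j
    simp only [Matrix.transpose_apply, Matrix.sub_apply, Matrix.neg_apply, Matrix.vecMulVec_apply]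
    ring⟩

/-- The underlying vector space `V = so(D) ⊕ ℝ^D ⊕ ℝ^D ⊕ ℝ`, an element
`(A, u, v, c)` standing for `A + B_u + P_v + cH`. -/
abbrev KV (D : ℕ) := soD D × (Fin D → ℝ) × (Fin D → ℝ) × ℝ

/-- The bracket of the light-cone presentation of `so(D+1,1)` on `V`:
`[A,A'] = AA' − A'A`, `[A,B_v] = B_{Av}`, `[A,P_v] = P_{Av}`, `[A,H] = 0`,
`[H,B_v] = B_v`, `[H,P_v] = −P_v`, `[B_u,P_v] = ⟨u,v⟩H + (uvᵀ − vuᵀ)`,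
all other brackets of generators zero. -/
def lcBr {D : ℕ} (X Y : KV D) : KV D :=
  (soComm X.1 Y.1 + outer X.2.1 Y.2.2.1 - outer Y.2.1 X.2.2.1,
   X.1.val.mulVec Y.2.1 - Y.1.val.mulVec X.2.1 + X.2.2.2 • Y.2.1 - Y.2.2.2 • X.2.1,
   X.1.val.mulVec Y.2.2.1 - Y.1.val.mulVec X.2.2.1 - X.2.2.2 • Y.2.2.1 + Y.2.2.2 • X.2.2.1,
   X.2.1 ⬝ᵥ Y.2.2.1 - Y.2.1 ⬝ᵥ X.2.2.1)

/-- The Carroll bracket on `V`: the only nonzero brackets of generators are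
`[A,A'] = AA' − A'A`, `[A,B_v] = B_{Av}`, `[A,P_v] = P_{Av}` and `[B_u,P_v] = ⟨u,v⟩H`. -/
def carrollBr {D : ℕ} (X Y : KV D) : KV D :=
  (soComm X.1 Y.1,
   X.1.val.mulVec Y.2.1 - Y.1.val.mulVec X.2.1,
   X.1.val.mulVec Y.2.2.1 - Y.1.val.mulVec X.2.2.1,
   X.2.1 ⬝ᵥ Y.2.2.1 - Y.2.1 ⬝ᵥ X.2.2.1)

/-- The linear map `g` on `V` which is the identity on `so(D)`, scales the `B`-component by `s`,
the `P`-component by `t`, and the `H`-component by `u`. -/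
def gscale {D : ℕ} (s t u : ℝ) (X : KV D) : KV D := (X.1, s • X.2.1, t • X.2.2.1, u * X.2.2.2)

/-- The contracted bracket `[X,Y]_t := g_t⁻¹ [g_t X, g_t Y]`, where `g_t` is the identity
on `so(D)` and on the `B`-component and scales the `P`- and `H`-components by `t`. -/
def contrBr {D : ℕ} (t : ℝ) (X Y : KV D) : KV D :=
  gscale 1 t⁻¹ t⁻¹ (lcBr (gscale 1 t t X) (gscale 1 t t Y))

end Stmt11

/-!
Give so(D) and the `B`-generators weight 0 and the `P`- and `H`-generators weight 1. A term
`[X,Y] ∋ Z` of the light-cone bracket is multiplied by `t ^ (w X + w Y - w Z)` under conjugation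
by `g_t`; the Carroll terms have exponent 0 and all others exponent 1, so
`[X,Y]_t = [X,Y]_Carroll + t • δ(X,Y)` with `δ` independent of `t`.
-/

namespace Stmt11

open Filter Topology

variable {D : ℕ}

@[simp]
theorem outer_zero_left (v : Fin D → ℝ) : outer 0 v = 0 := by
  ext1; simp [outer]

@[simp]
theorem outer_zero_right (u : Fin D → ℝ) : outer u 0 = 0 := by
  ext1; simp [outer]

theorem outer_smul_right (t : ℝ) (u v : Fin D → ℝ) : outer u (t • v) = t • outer u v := by
  ext1; simp [outer, smul_sub]

@[simp]
theorem soComm_zero_left (A : soD D) : soComm 0 A = 0 := by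
  ext1; simp [soComm]

/-- The terms of `lcBr` that `g_t` rescales by `t`. -/
def lcBrDefect (X Y : KV D) : KV D :=
  (outer X.2.1 Y.2.2.1 - outer Y.2.1 X.2.2.1,
   X.2.2.2 • Y.2.1 - Y.2.2.2 • X.2.1,
   Y.2.2.2 • X.2.2.1 - X.2.2.2 • Y.2.2.1,
   0)

theorem contrBr_eq_carrollBr_add_smul {t : ℝ} (ht : t ≠ 0) (X Y : KV D) :
    contrBr t X Y = carrollBr X Y + t • lcBrDefect X Y := by
  refine Prod.ext ?_ (Prod.ext ?_ (Prod.ext ?_ ?_))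
  · simp only [contrBr, gscale, lcBr, carrollBr, lcBrDefect, one_smul, outer_smul_right,
      Prod.fst_add, Prod.smul_fst, smul_sub]
    abel
  · ext i
    simp only [contrBr, gscale, lcBr, carrollBr, lcBrDefect, one_smul, Prod.snd_add,
      Prod.fst_add, Prod.smul_snd, Prod.smul_fst, Pi.add_apply, Pi.sub_apply, Pi.smul_apply,
      smul_eq_mul]
    ring
  · ext i
    simp only [contrBr, gscale, lcBr, carrollBr, lcBrDefect, one_smul, Matrix.mulVec_smul,
      Prod.snd_add, Prod.fst_add, Prod.smul_snd, Prod.smul_fst, Pi.add_apply, Pi.sub_apply,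
      Pi.smul_apply, smul_eq_mul]
    field_simp
    ring
  · simp only [contrBr, gscale, lcBr, carrollBr, lcBrDefect, one_smul, dotProduct_smul,
      Prod.snd_add, Prod.smul_snd, smul_eq_mul, mul_zero, add_zero]
    field_simp

theorem tendsto_contrBr_carrollBr (X Y : KV D) :
    Tendsto (fun t : ℝ => contrBr t X Y) (𝓝[>] 0) (𝓝 (carrollBr X Y)) := by
  have hlin : Tendsto (fun t : ℝ => carrollBr X Y + t • lcBrDefect X Y) (𝓝 0)
      (𝓝 (carrollBr X Y)) := by
    simpa using
      ((tendsto_id (x := 𝓝 (0 : ℝ))).smul_const (lcBrDefect X Y)).const_add (carrollBr X Y)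
  refine (hlin.mono_left nhdsWithin_le_nhds).congr' ?_
  filter_upwards [self_mem_nhdsWithin] with t ht
  exact (contrBr_eq_carrollBr_add_smul ht.ne' X Y).symm

end Stmt11

open Stmt11 in
theorem stmt11_general (D : ℕ) :
    (∀ t : ℝ, 0 < t →
      (∀ v : Fin D → ℝ, contrBr t ((0, 0, 0, 1) : KV D) (0, v, 0, 0) = (0, t • v, 0, 0)) ∧
      (∀ v : Fin D → ℝ, contrBr t ((0, 0, 0, 1) : KV D) (0, 0, v, 0) = (0, 0, (-t) • v, 0)) ∧
      (∀ u v : Fin D → ℝ,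
        contrBr t ((0, u, 0, 0) : KV D) (0, 0, v, 0) = (t • outer u v, 0, 0, u ⬝ᵥ v))) ∧
    (∀ X Y : KV D,
      Filter.Tendsto (fun t : ℝ => contrBr t X Y) (nhdsWithin 0 (Set.Ioi 0))
        (nhds (carrollBr X Y))) := by
  refine ⟨fun t ht => ?_, tendsto_contrBr_carrollBr⟩
  simp only [contrBr_eq_carrollBr_add_smul ht.ne']
  refine ⟨fun v => ?_, fun v => ?_, fun u v => ?_⟩ <;>
    simp [carrollBr, lcBrDefect, neg_smul]

open Stmt11 in
/-- For the light-cone presentation of `so(D+1,1)`, the contracted brackets satisfy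
`[H,B_v]_t = t B_v`, `[H,P_v]_t = −t P_v`, `[B_u,P_v]_t = ⟨u,v⟩H + t(uvᵀ − vuᵀ)`,
and converge, as `t → 0⁺`, to the Carroll bracket.  In particular, the Carroll Lie algebra is a
contraction of `so(D+1,1)`, corresponding to the limit from the light-cone spacetime `LC` to the
carrollian spacetime `C`. -/
theorem stmt11 (D : ℕ) (hD : 1 ≤ D) :
    (∀ t : ℝ, 0 < t →
      (∀ v : Fin D → ℝ, contrBr t ((0, 0, 0, 1) : KV D) (0, v, 0, 0) = (0, t • v, 0, 0)) ∧
      (∀ v : Fin D → ℝ, contrBr t ((0, 0, 0, 1) : KV D) (0, 0, v, 0) = (0, 0, (-t) • v, 0)) ∧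
      (∀ u v : Fin D → ℝ,
        contrBr t ((0, u, 0, 0) : KV D) (0, 0, v, 0) = (t • outer u v, 0, 0, u ⬝ᵥ v))) ∧
    (∀ X Y : KV D,
      Filter.Tendsto (fun t : ℝ => contrBr t X Y) (nhdsWithin 0 (Set.Ioi 0))
        (nhds (carrollBr X Y))) :=
  stmt11_general D
end
end

section
/- Let α be an irrational real number and let X ∈ M₃(ℂ) be the diagonal matrix X = diag(i, αi, −(1+α)i). Then (i) exp(tX) belongs to SU(3) for every t ∈ ℝ; (ii) the closure in M₃(ℂ) of the one-parameter subgroup S := {exp(tX) : t ∈ ℝ} equals the maximal torus T := {diag(z₁, z₂, z₃) : z₁, z₂, z₃ ∈ ℂ, |z₁| = |z₂| = |z₃| = 1, z₁z₂z₃ = 1}; and (iii) S ≠ T, so S is NOT a closed subgroup of SU(3). -/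
/-!
Since `exp(tX) = diag(e^{it}, e^{iαt}, (e^{it} e^{iαt})⁻¹)`, both `S` and `T` are images under the
continuous injection `(a, b) ↦ diag(a, b, (ab)⁻¹)` of the compact torus `𝕋²`: `T` is the whole
image, and `S` is the image of the line `t ↦ (e^{it}, e^{iαt})`, which is dense in `𝕋²` because the
rotation of the circle by `2πα` has dense orbits (Kronecker). Hence `closure S = T`. On the other
hand `diag(1, -1, -1) ∈ T \ S`: `e^{it} = 1` forces `t ∈ 2πℤ`, and then `e^{iαt} = -1` would make
`α` rational.
-/

open Matrix

noncomputable section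

namespace Stmt13

/-- The diagonal matrix `X = diag(i, αi, −(1+α)i) ∈ M₃(ℂ)`. -/
def Xmat (α : ℝ) : Matrix (Fin 3) (Fin 3) ℂ :=
  Matrix.diagonal ![Complex.I, (α : ℂ) * Complex.I, -((1 : ℂ) + (α : ℂ)) * Complex.I]

/-- The one-parameter subgroup `S = {exp(tX) : t ∈ ℝ}`. -/
def S (α : ℝ) : Set (Matrix (Fin 3) (Fin 3) ℂ) :=
  {M | ∃ t : ℝ, M = NormedSpace.exp (t • Xmat α)}

/-- The maximal torus `T` of diagonal matrices in `SU(3)`. -/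
def T : Set (Matrix (Fin 3) (Fin 3) ℂ) :=
  {M | ∃ z₁ z₂ z₃ : ℂ, M = Matrix.diagonal ![z₁, z₂, z₃] ∧
    ‖z₁‖ = 1 ∧ ‖z₂‖ = 1 ∧ ‖z₃‖ = 1 ∧ z₁ * z₂ * z₃ = 1}

end Stmt13

open Set Real

theorem Circle.denseRange_exp_intCast_mul {α : ℝ} (hα : Irrational α) :
    DenseRange fun n : ℤ ↦ Circle.exp (n * (2 * π * α)) := by
  have h : DenseRange fun n : ℤ ↦ n • (↑(2 * π * α) : AddCircle (2 * π)) :=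
    AddCircle.denseRange_zsmul_coe_iff.2 (by rwa [mul_div_cancel_left₀ _ two_pi_pos.ne'])
  convert AddCircle.homeomorphCircle'.surjective.denseRange.comp h
    AddCircle.homeomorphCircle'.continuous using 2 with n
  rw [Function.comp_apply, ← AddCircle.coe_zsmul, AddCircle.homeomorphCircle'_apply_mk,
    zsmul_eq_mul]

theorem Circle.denseRange_exp_prod_exp_mul {α : ℝ} (hα : Irrational α) :
    DenseRange fun t : ℝ ↦ (Circle.exp t, Circle.exp (α * t)) := by
  rintro ⟨a, b⟩
  obtain ⟨θ, rfl⟩ := Circle.exp_surjective a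
  have hb : b ∈ closure (range fun n : ℤ ↦ Circle.exp (α * θ) * Circle.exp (n * (2 * π * α))) :=
    ((Homeomorph.mulLeft _).surjective.denseRange.comp (denseRange_exp_intCast_mul hα)
      (Homeomorph.mulLeft _).continuous) b
  -- `t = θ + 2πn` keeps the first coordinate at `exp θ` and moves the second along `hb`'s orbit
  refine map_mem_closure (Continuous.prodMk_right (Circle.exp θ)) hb ?_
  rintro _ ⟨n, rfl⟩
  refine ⟨θ + n * (2 * π), ?_⟩
  dsimp only
  rw [Circle.exp_add, Circle.exp_int_mul_two_pi, mul_one, ← Circle.exp_add]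
  congr 2
  ring

theorem Circle.exp_mul_ne_neg_one_of_exp_eq_one {α t : ℝ} (hα : Irrational α)
    (ht : Circle.exp t = 1) :
    Circle.exp (α * t) ≠ -1 := by
  intro h
  obtain ⟨n, rfl⟩ := Circle.exp_eq_one.1 ht
  have hπ : Circle.exp π = -1 := Circle.ext <| by simp [Circle.coe_exp, Complex.exp_pi_mul_I]
  rw [← hπ, Circle.exp_eq_exp] at h
  obtain ⟨m, hm⟩ := h
  have key : α * (2 * n : ℤ) = (2 * m + 1 : ℤ) := by
    push_cast
    apply mul_right_cancel₀ pi_ne_zero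
    linear_combination hm
  rcases eq_or_ne n 0 with rfl | hn
  · rw [mul_zero, Int.cast_zero, mul_zero, eq_comm] at key
    norm_cast at key
    omega
  · exact (hα.mul_intCast (by omega)).ne_int _ key

theorem Matrix.diagonal_coe_mem_specialUnitaryGroup {n : Type*} [Fintype n] [DecidableEq n]
    (v : n → Circle) (hv : ∏ i, v i = 1) :
    diagonal (fun i ↦ (v i : ℂ)) ∈ specialUnitaryGroup n ℂ := by
  refine mem_specialUnitaryGroup_iff.2 ⟨?_, ?_⟩
  · rw [mem_unitaryGroup_iff, star_eq_conjTranspose, diagonal_conjTranspose,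
      diagonal_mul_diagonal, ← diagonal_one]
    congr 1
    ext i
    simp [Complex.mul_conj', Circle.norm_coe]
  · rw [det_diagonal, ← Circle.coe_one, ← hv]
    exact (map_prod Circle.coeHom v Finset.univ).symm

theorem closure_range_comp_eq {X Y Z : Type*} [TopologicalSpace X] [TopologicalSpace Y]
    [TopologicalSpace Z] {f : Y → Z} {g : X → Y} (hf : Continuous f) (hfc : IsClosed (range f))
    (hg : DenseRange g) : closure (range (f ∘ g)) = range f := by
  refine (closure_minimal (range_comp_subset_range g f) hfc).antisymm ?_
  rw [← image_univ, ← hg.closure_range, range_comp]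
  exact image_closure_subset_closure_image hf

namespace Stmt13

def torusDiag (p : Circle × Circle) : Matrix (Fin 3) (Fin 3) ℂ :=
  diagonal fun i ↦ (![p.1, p.2, (p.1 * p.2)⁻¹] i : ℂ)

lemma torusDiag_apply (p : Circle × Circle) :
    torusDiag p = diagonal ![(p.1 : ℂ), p.2, ((p.1 * p.2)⁻¹ : Circle)] := by
  rw [torusDiag]
  congr 1
  ext i
  fin_cases i <;> rfl

lemma continuous_torusDiag : Continuous torusDiag :=
  Continuous.matrix_diagonal <| continuous_pi fun i ↦
    continuous_subtype_val.comp <| by fin_cases i <;> dsimp <;> fun_prop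

lemma torusDiag_injective : Function.Injective torusDiag := by
  intro p q h
  have h' := diagonal_injective h
  exact Prod.ext (Circle.ext (congrFun h' 0)) (Circle.ext (congrFun h' 1))

lemma torusDiag_mem_specialUnitaryGroup (p : Circle × Circle) :
    torusDiag p ∈ specialUnitaryGroup (Fin 3) ℂ :=
  diagonal_coe_mem_specialUnitaryGroup _ (by simp [Fin.prod_univ_three])

lemma range_torusDiag : range torusDiag = T := by
  ext M
  constructor
  · rintro ⟨p, rfl⟩
    refine ⟨_, _, _, torusDiag_apply p, Circle.norm_coe _, Circle.norm_coe _,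
      Circle.norm_coe _, ?_⟩
    rw [← Circle.coe_mul, ← Circle.coe_mul, mul_inv_cancel, Circle.coe_one]
  · rintro ⟨z₁, z₂, z₃, rfl, h₁, h₂, -, h⟩
    refine ⟨(⟨z₁, mem_sphere_zero_iff_norm.2 h₁⟩, ⟨z₂, mem_sphere_zero_iff_norm.2 h₂⟩), ?_⟩
    rw [torusDiag_apply, eq_inv_of_mul_eq_one_right h]
    rfl

lemma exp_smul_Xmat (α t : ℝ) :
    NormedSpace.exp (t • Xmat α) = torusDiag (Circle.exp t, Circle.exp (α * t)) := by
  rw [Xmat, ← diagonal_smul, exp_diagonal, torusDiag_apply]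
  congr 1
  ext i
  fin_cases i <;>
    simp [Circle.coe_exp, ← Complex.exp_eq_exp_ℂ, ← Complex.exp_neg, ← Complex.exp_add] <;>
    ring_nf

lemma S_eq_range (α : ℝ) :
    S α = range (torusDiag ∘ fun t : ℝ ↦ (Circle.exp t, Circle.exp (α * t))) := by
  ext M
  simp only [S, exp_smul_Xmat, mem_ofPred_eq, mem_range, Function.comp_apply, eq_comm]

lemma closure_S {α : ℝ} (hα : Irrational α) : closure (S α) = T := by
  rw [S_eq_range, closure_range_comp_eq continuous_torusDiag
    (isCompact_range continuous_torusDiag).isClosed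
    (Circle.denseRange_exp_prod_exp_mul hα), range_torusDiag]

lemma S_ne_T {α : ℝ} (hα : Irrational α) : S α ≠ T := by
  intro h
  obtain ⟨t, ht⟩ : torusDiag (1, -1) ∈ S α := h ▸ range_torusDiag ▸ mem_range_self _
  obtain ⟨h₁, h₂⟩ := Prod.ext_iff.1 (torusDiag_injective (ht.trans (exp_smul_Xmat α t)))
  exact Circle.exp_mul_ne_neg_one_of_exp_eq_one hα h₁.symm h₂.symm

end Stmt13

open Stmt13 in
/-- For `α` irrational and `X = diag(i, αi, −(1+α)i)`: (i) `exp(tX) ∈ SU(3)` for all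
`t ∈ ℝ`; (ii) the closure of the one-parameter subgroup `S = {exp(tX)}` is the maximal
torus `T` of diagonal special unitary matrices; and (iii) `S ≠ T`, so `S` is not a closed
subgroup of `SU(3)`. -/
theorem stmt13 (α : ℝ) (hα : Irrational α) :
    (∀ t : ℝ, NormedSpace.exp (t • Xmat α) ∈ Matrix.specialUnitaryGroup (Fin 3) ℂ) ∧
    closure (S α) = T ∧
    S α ≠ T :=
  ⟨fun t ↦ exp_smul_Xmat α t ▸ torusDiag_mem_specialUnitaryGroup _, closure_S hα, S_ne_T hα⟩
end
end

section
/- Let α, β, γ ∈ ℝ. On the vector space a = so(3) ⊕ ℝ³ ⊕ ℝ, with elements written A + P_v + cH, define the skew-symmetric bilinear bracket by [A,A'] = AA' − A'A, [A,P_v] = P_{Av}, [A,H] = 0, [H,P_v] = αP_v, and [P_u,P_v] = β(uvᵀ − vuᵀ) + γP_{u×v}, where u×v is the vector cross product on ℝ³. Then this bracket satisfies the Jacobi identity if and only if αβ = 0 and αγ = 0. -/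
open Matrix

noncomputable section

namespace Stmt15

/-- `so(3)`: the real skew-symmetric `3 × 3` matrices. -/
def so3 : Submodule ℝ (Matrix (Fin 3) (Fin 3) ℝ) where
  carrier := {M | Mᵀ = -M}
  add_mem' := fun {a b} ha hb => by
    simp only [Set.mem_setOf_eq] at ha hb ⊢
    rw [Matrix.transpose_add, ha, hb, neg_add]
  zero_mem' := by simp only [Set.mem_setOf_eq, Matrix.transpose_zero, neg_zero]
  smul_mem' := fun c a ha => by
    simp only [Set.mem_setOf_eq] at ha ⊢
    rw [Matrix.transpose_smul, ha, smul_neg]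

theorem mem_so3 {M : Matrix (Fin 3) (Fin 3) ℝ} : M ∈ so3 ↔ Mᵀ = -M := Iff.rfl

/-- The commutator `AA' − A'A` of two skew-symmetric matrices, as an element of `so(3)`. -/
def soComm (A B : so3) : so3 :=
  ⟨A.val * B.val - B.val * A.val, by
    have hA : (A.val)ᵀ = -A.val := A.2
    have hB : (B.val)ᵀ = -B.val := B.2
    rw [mem_so3, Matrix.transpose_sub, Matrix.transpose_mul, Matrix.transpose_mul, hA, hB,
      neg_mul_neg, neg_mul_neg, neg_sub]⟩

/-- `uvᵀ − vuᵀ` as an element of `so(3)`. -/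
def outer (u v : Fin 3 → ℝ) : so3 :=
  ⟨vecMulVec u v - vecMulVec v u, by
    rw [mem_so3]
    ext i j
    simp only [Matrix.transpose_apply, Matrix.sub_apply, Matrix.neg_apply, Matrix.vecMulVec_apply]
    ring⟩

/-- The underlying vector space `a = so(3) ⊕ ℝ³ ⊕ ℝ`, an element `(A, v, c)` standing
for `A + P_v + cH`. -/
abbrev AV3 := so3 × (Fin 3 → ℝ) × ℝ

/-- The skew-symmetric bilinear bracket on `a` determined by `[A,A'] = AA' − A'A`,
`[A,P_v] = P_{Av}`, `[A,H] = 0`, `[H,P_v] = αP_v` and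
`[P_u,P_v] = β(uvᵀ − vuᵀ) + γP_{u×v}`. -/
def ariBr3 (α β γ : ℝ) (X Y : AV3) : AV3 :=
  (soComm X.1 Y.1 + β • outer X.2.1 Y.2.1,
   X.1.val.mulVec Y.2.1 - Y.1.val.mulVec X.2.1 + (α * X.2.2) • Y.2.1 - (α * Y.2.2) • X.2.1
     + γ • crossProduct X.2.1 Y.2.1,
   0)


end Stmt15

/-!
Write `X = A + P_u + aH`, `Y = B + P_v + bH`, `Z = C + P_w + cH` and `J(u,v) = uvᵀ − vuᵀ`.
The Jacobiator can be computed in closed form: the matrix commutator satisfies Jacobi, and skew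
matrices act as derivations of both `J` and the cross product, so all terms cancel except
the cyclic sums `∑ J(u,v)w` and `∑ J(u×v, w)`, which vanish by the Jacobi identity of the cross
product because `J(u,v)w = w × (u × v)`, and the terms coming from `H`. These leave
`2αβ (a J(v,w) + b J(w,u) + c J(u,v)) + αγ P_{a v×w + b w×u + c u×v}`, which vanishes
identically iff `αβ = αγ = 0`; evaluating at `(H, P_{e₁}, P_{e₂})` gives necessity.
-/

section CrossProduct

variable {R : Type*} [CommRing R]

theorem jacobi_cross_left (u v w : Fin 3 → R) :
    u ⨯₃ v ⨯₃ w + v ⨯₃ w ⨯₃ u + w ⨯₃ u ⨯₃ v = 0 := by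
  linear_combination (norm := module) -jacobi_cross w u v - cross_anticomm w (u ⨯₃ v)
    - cross_anticomm u (v ⨯₃ w) - cross_anticomm v (w ⨯₃ u)

namespace Matrix

theorem vecMulVec_mulVec_of_transpose_eq_neg {n : Type*} [Fintype n] {A : Matrix n n R}
    (hA : Aᵀ = -A) (v w : n → R) : vecMulVec v (A *ᵥ w) = -(vecMulVec v w * A) := by
  rw [← vecMul_transpose, hA, vecMul_neg, vecMulVec_neg, vecMulVec_mul]

theorem transpose_mulVec_cross_add (A : Matrix (Fin 3) (Fin 3) R) (u v : Fin 3 → R) :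
    Aᵀ *ᵥ (u ⨯₃ v) + (A *ᵥ u) ⨯₃ v + u ⨯₃ (A *ᵥ v) = A.trace • (u ⨯₃ v) := by
  ext i
  fin_cases i <;>
    simp [cross_apply, mulVec, dotProduct, Fin.sum_univ_three, trace, vecHead, vecTail] <;> ring

theorem vecMulVec_sub_vecMulVec_mulVec (u v w : Fin 3 → R) :
    (vecMulVec u v - vecMulVec v u) *ᵥ w = w ⨯₃ (u ⨯₃ v) := by
  rw [sub_mulVec, vecMulVec_mulVec, vecMulVec_mulVec, cross_cross_eq_smul_sub_smul',
    op_smul_eq_smul, op_smul_eq_smul, dotProduct_comm w]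

theorem vecMulVec_sub_vecMulVec_cross_jacobi (u v w : Fin 3 → R) :
    (vecMulVec (u ⨯₃ v) w - vecMulVec w (u ⨯₃ v)) + (vecMulVec (v ⨯₃ w) u - vecMulVec u (v ⨯₃ w))
      + (vecMulVec (w ⨯₃ u) v - vecMulVec v (w ⨯₃ u)) = 0 := by
  refine ext_of_mulVec_single fun i => ?_
  simp only [add_mulVec, vecMulVec_sub_vecMulVec_mulVec, ← map_add, jacobi_cross_left, map_zero,
    zero_mulVec]

end Matrix

end CrossProduct

namespace Stmt15

theorem mulVec_cross_of_mem_so3 {A : Matrix (Fin 3) (Fin 3) ℝ} (hA : A ∈ so3) (u v : Fin 3 → ℝ) :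
    A *ᵥ (u ⨯₃ v) = (A *ᵥ u) ⨯₃ v + u ⨯₃ (A *ᵥ v) := by
  have htrace : A.trace = 0 := by
    have := congrArg trace (mem_so3.mp hA)
    rw [trace_transpose, trace_neg] at this
    linarith
  have h := transpose_mulVec_cross_add A u v
  rw [mem_so3.mp hA, htrace, zero_smul, neg_mulVec] at h
  linear_combination (norm := module) -h

theorem jacobiator_ariBr3 (α β γ : ℝ) (X Y Z : AV3) :
    ariBr3 α β γ (ariBr3 α β γ X Y) Z + ariBr3 α β γ (ariBr3 α β γ Y Z) X
      + ariBr3 α β γ (ariBr3 α β γ Z X) Y =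
    ((2 * (α * β)) • (X.2.2 • outer Y.2.1 Z.2.1 + Y.2.2 • outer Z.2.1 X.2.1
        + Z.2.2 • outer X.2.1 Y.2.1),
     (α * γ) • (X.2.2 • Y.2.1 ⨯₃ Z.2.1 + Y.2.2 • Z.2.1 ⨯₃ X.2.1 + Z.2.2 • X.2.1 ⨯₃ Y.2.1), 0) := by
  obtain ⟨⟨A, hA⟩, u, a⟩ := X
  obtain ⟨⟨B, hB⟩, v, b⟩ := Y
  obtain ⟨⟨C, hC⟩, w, c⟩ := Z
  refine Prod.ext (Subtype.ext ?_) (Prod.ext ?_ ?_)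
  · simp only [ariBr3, soComm, outer, Prod.fst_add, Submodule.coe_add, Submodule.coe_smul]
    simp only [sub_vecMulVec, vecMulVec_sub, add_vecMulVec, vecMulVec_add, smul_vecMulVec,
      vecMulVec_smul, ← mul_vecMulVec, vecMulVec_mulVec_of_transpose_eq_neg hA,
      vecMulVec_mulVec_of_transpose_eq_neg hB, vecMulVec_mulVec_of_transpose_eq_neg hC,
      mul_sub, sub_mul, mul_add, add_mul, smul_mul_assoc, mul_smul_comm, Matrix.mul_assoc]
    linear_combination (norm := module) (β * γ) • vecMulVec_sub_vecMulVec_cross_jacobi u v w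
  · simp only [ariBr3, soComm, outer, Prod.snd_add, Prod.fst_add, Submodule.coe_add,
      Submodule.coe_smul, add_mulVec, smul_mulVec, vecMulVec_sub_vecMulVec_mulVec]
    simp only [sub_mulVec, ← mulVec_mulVec, mulVec_add, mulVec_sub, mulVec_smul,
      mulVec_cross_of_mem_so3 hA, mulVec_cross_of_mem_so3 hB, mulVec_cross_of_mem_so3 hC,
      map_add, map_sub, map_smul, LinearMap.add_apply, LinearMap.sub_apply, LinearMap.smul_apply,
      mul_zero, zero_smul]
    linear_combination (norm := module) β • jacobi_cross w u v + (γ * γ) • jacobi_cross_left u v w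
      - γ • cross_anticomm' u (C *ᵥ v) - γ • cross_anticomm' v (A *ᵥ w)
      - γ • cross_anticomm' w (B *ᵥ u) - (α * γ * a) • cross_anticomm' v w
      - (α * γ * b) • cross_anticomm' w u - (α * γ * c) • cross_anticomm' u v
  · simp [ariBr3]

end Stmt15

open Stmt15 in
/-- The bracket on `so(3) ⊕ ℝ³ ⊕ ℝ` given by `[A,A'] = AA' − A'A`, `[A,P_v] = P_{Av}`,
`[A,H] = 0`, `[H,P_v] = αP_v`, `[P_u,P_v] = β(uvᵀ − vuᵀ) + γP_{u×v}` satisfies the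
Jacobi identity if and only if `αβ = 0` and `αγ = 0`. -/
theorem stmt15 (α β γ : ℝ) :
    (∀ X Y Z : AV3,
        ariBr3 α β γ (ariBr3 α β γ X Y) Z + ariBr3 α β γ (ariBr3 α β γ Y Z) X
          + ariBr3 α β γ (ariBr3 α β γ Z X) Y = 0) ↔ (α * β = 0 ∧ α * γ = 0) := by
  simp_rw [jacobiator_ariBr3]
  constructor
  · intro h
    have h := congrArg (fun t : AV3 => (t.1.val 0 1, t.2.1 2))
      (h (0, 0, 1) (0, ![1, 0, 0], 0) (0, ![0, 1, 0], 0))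
    simpa [outer, cross_apply] using h
  · rintro ⟨hβ, hγ⟩ X Y Z
    simp [hβ, hγ]
end
end

section
/- Let D ≥ 3 and let c be the Carroll algebra: the real Lie algebra with basis {J_{ab} = −J_{ba}, B_a, P_a, H} and nonzero brackets [J_{ab},J_{cd}] = δ_{bc}J_{ad} − δ_{ac}J_{bd} − δ_{bd}J_{ac} + δ_{ad}J_{bc}, [J_{ab},B_c] = δ_{bc}B_a − δ_{ac}B_b, [J_{ab},P_c] = δ_{bc}P_a − δ_{ac}P_b, [B_a,P_b] = δ_{ab}H. For (α,β) ∈ ℝ² with (α,β) ≠ (0,0), let h_{α,β} := span{J_{ab} (1 ≤ a < b ≤ D)} ⊕ span{αB_a + βP_a (1 ≤ a ≤ D)}. Then (i) every h_{α,β} is a Lie subalgebra of c, and (ii) for every such (α,β) there exists a Lie algebra automorphism φ of c with φ(h_{α,β}) = h_{1,0} = span{J_{ab}, B_a}. Consequently, up to automorphism the Carroll algebra admits a unique admissible subalgebra, and hence a unique associated homogeneous spacetime (the carrollian spacetime). -/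
/-!
`GL(2, ℝ)` acts on the Carroll algebra by automorphisms: a matrix `A` treats each pair
`(B_a, P_a)` as the standard basis of `ℝ²`, fixes the `J_ab` and rescales `H` by `det A`.
The brackets are respected because rotations act on `B` and `P` alike, while
`[B_a, P_b] = δ_ab H` is `δ_ab` times the area form of `ℝ²`, which `A` scales by `det A`.
This action carries `h_{α,β}` to `h_{A(α,β)}`, and `GL(2, ℝ)` is transitive on the nonzero
vectors of `ℝ²`.
-/

namespace Stmt18

/-- Kronecker delta. -/
def kron {n : ℕ} (a b : Fin n) : ℝ := if a = b then 1 else 0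

/-- The family `{J_{ab} (a < b), B_a, P_a, H}`, indexing a basis of a kinematical Lie
algebra. -/
def kinFam {L : Type*} {D : ℕ} (J : Fin D → Fin D → L) (B P : Fin D → L) (H : L) :
    ({p : Fin D × Fin D // p.1 < p.2} ⊕ (Fin D ⊕ (Fin D ⊕ Unit))) → L :=
  Sum.elim (fun p => J p.1.1 p.1.2) (Sum.elim B (Sum.elim P fun _ => H))

/-- The admissible subspace `h_{α,β} = span{J_{ab}} ⊕ span{αB_a + βP_a}`. -/
def adm {L : Type*} [AddCommGroup L] [Module ℝ L] {D : ℕ}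
    (J : Fin D → Fin D → L) (B P : Fin D → L) (α β : ℝ) : Submodule ℝ L :=
  Submodule.span ℝ ((Set.range fun p : Fin D × Fin D => J p.1 p.2) ∪
    Set.range fun a => α • B a + β • P a)

end Stmt18

namespace Stmt18

open Matrix

section General

variable {R L L' : Type*} [CommRing R] [LieRing L] [LieAlgebra R L] [LieRing L'] [LieAlgebra R L']

theorem lie_mem_span {s : Set L} (h : ∀ x ∈ s, ∀ y ∈ s, ⁅x, y⁆ ∈ Submodule.span R s)
    {X Y : L} (hX : X ∈ Submodule.span R s) (hY : Y ∈ Submodule.span R s) :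
    ⁅X, Y⁆ ∈ Submodule.span R s := by
  induction hX, hY using Submodule.span_induction₂ with
  | mem_mem x y hx hy => exact h x hx y hy
  | zero_left y _ => simp
  | zero_right x _ => simp
  | add_left x y z _ _ _ h₁ h₂ => rw [add_lie]; exact add_mem h₁ h₂
  | add_right x y z _ _ _ h₁ h₂ => rw [lie_add]; exact add_mem h₁ h₂
  | smul_left r x y _ _ h₁ => rw [smul_lie]; exact Submodule.smul_mem _ _ h₁
  | smul_right r x y _ _ h₁ => rw [lie_smul]; exact Submodule.smul_mem _ _ h₁

theorem map_lie_of_basis {ι : Type*} (b : Module.Basis ι R L) (f : L →ₗ[R] L')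
    (h : ∀ i j, ⁅f (b i), f (b j)⁆ = f ⁅b i, b j⁆) (x y : L) :
    ⁅f x, f y⁆ = f ⁅x, y⁆ := by
  have hbilin : ((LieAlgebra.ad R L' : L' →ₗ[R] Module.End R L').compl₁₂ f f) =
      (LieAlgebra.ad R L : L →ₗ[R] Module.End R L).compr₂ f :=
    LinearMap.ext_basis b b h
  exact LinearMap.congr_fun₂ hbilin x y

end General

variable {L : Type*} [LieRing L] [LieAlgebra ℝ L] {D : ℕ}

theorem kron_comm (a b : Fin D) : kron a b = kron b a := by
  simp [kron, eq_comm]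

structure CarrollBrackets (J : Fin D → Fin D → L) (B P : Fin D → L) (H : L) : Prop where
  J_skew : ∀ a b, J a b = -J b a
  lie_J_J : ∀ a b c d, ⁅J a b, J c d⁆ =
    kron b c • J a d - kron a c • J b d - kron b d • J a c + kron a d • J b c
  lie_J_B : ∀ a b c, ⁅J a b, B c⁆ = kron b c • B a - kron a c • B b
  lie_J_P : ∀ a b c, ⁅J a b, P c⁆ = kron b c • P a - kron a c • P b
  lie_J_H : ∀ a b, ⁅J a b, H⁆ = 0
  lie_H_B : ∀ a, ⁅H, B a⁆ = 0
  lie_H_P : ∀ a, ⁅H, P a⁆ = 0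
  lie_B_B : ∀ a b, ⁅B a, B b⁆ = 0
  lie_P_P : ∀ a b, ⁅P a, P b⁆ = 0
  lie_B_P : ∀ a b, ⁅B a, P b⁆ = kron a b • H

namespace CarrollBrackets

variable {J : Fin D → Fin D → L} {B P : Fin D → L} {H : L} (hc : CarrollBrackets J B P H)
include hc

theorem J_self (a : Fin D) : J a a = 0 := by
  have h2 : (2 : ℝ) • J a a = 0 := by
    rw [two_smul]
    nth_rewrite 1 [hc.J_skew a a]
    exact neg_add_cancel _
  exact (smul_eq_zero.mp h2).resolve_left two_ne_zero

theorem lie_J_smul_add_smul (a b c : Fin D) (x y : ℝ) :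
    ⁅J a b, x • B c + y • P c⁆ =
      kron b c • (x • B a + y • P a) - kron a c • (x • B b + y • P b) := by
  simp only [lie_add, lie_smul, hc.lie_J_B, hc.lie_J_P]
  module

theorem lie_smul_add_smul (a b : Fin D) (x y x' y' : ℝ) :
    ⁅x • B a + y • P a, x' • B b + y' • P b⁆ =
      ((x * y' - y * x') * kron a b) • H := by
  simp only [lie_add, add_lie, lie_smul, smul_lie, hc.lie_B_B, hc.lie_P_P, hc.lie_B_P,
    ← lie_skew (P a), kron_comm b a]
  module

theorem lie_mem_adm (α β : ℝ) {X Y : L} (hX : X ∈ adm J B P α β)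
    (hY : Y ∈ adm J B P α β) : ⁅X, Y⁆ ∈ adm J B P α β := by
  have memJ (a b : Fin D) : J a b ∈ adm J B P α β :=
    Submodule.subset_span (Or.inl ⟨(a, b), rfl⟩)
  have memW (a : Fin D) : α • B a + β • P a ∈ adm J B P α β :=
    Submodule.subset_span (Or.inr ⟨a, rfl⟩)
  have lie_J_W (a b c : Fin D) : ⁅J a b, α • B c + β • P c⁆ ∈ adm J B P α β := by
    rw [hc.lie_J_smul_add_smul]
    exact sub_mem (Submodule.smul_mem _ _ (memW a)) (Submodule.smul_mem _ _ (memW b))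
  refine lie_mem_span ?_ hX hY
  rintro _ (⟨⟨a, b⟩, rfl⟩ | ⟨a, rfl⟩) _ (⟨⟨c, d⟩, rfl⟩ | ⟨c, rfl⟩)
  · rw [hc.lie_J_J]
    refine add_mem (sub_mem (sub_mem ?_ ?_) ?_) ?_ <;> exact Submodule.smul_mem _ _ (memJ _ _)
  · exact lie_J_W a b c
  · rw [← lie_skew]
    exact neg_mem (lie_J_W c d a)
  · rw [hc.lie_smul_add_smul, mul_comm α β, sub_self, zero_mul, zero_smul]
    exact zero_mem _

end CarrollBrackets

section Action

variable {J : Fin D → Fin D → L} {B P : Fin D → L} {H : L}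
  (hindep : LinearIndependent ℝ (kinFam J B P H))
  (hspan : Submodule.span ℝ (Set.range (kinFam J B P H)) = ⊤)

-- `A` acts on each pair `(B_a, P_a)` as on the standard basis of `ℝ²`, and on `H` by `det A`.
noncomputable def carrollMap (A : Matrix (Fin 2) (Fin 2) ℝ) : L →ₗ[ℝ] L :=
  (Module.Basis.mk hindep hspan.ge).constr ℝ
    (kinFam J (fun a => A 0 0 • B a + A 1 0 • P a) (fun a => A 0 1 • B a + A 1 1 • P a)
      (A.det • H))

variable (A : Matrix (Fin 2) (Fin 2) ℝ)

theorem carrollMap_kinFam (i) :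
    carrollMap hindep hspan A (kinFam J B P H i) =
      kinFam J (fun a => A 0 0 • B a + A 1 0 • P a) (fun a => A 0 1 • B a + A 1 1 • P a)
        (A.det • H) i := by
  rw [carrollMap, ← Module.Basis.mk_apply hindep hspan.ge, Module.Basis.constr_basis]

theorem carrollMap_J_of_lt {a b : Fin D} (h : a < b) :
    carrollMap hindep hspan A (J a b) = J a b :=
  carrollMap_kinFam hindep hspan A (.inl ⟨(a, b), h⟩)

theorem carrollMap_B (a : Fin D) :
    carrollMap hindep hspan A (B a) = A 0 0 • B a + A 1 0 • P a :=
  carrollMap_kinFam hindep hspan A (.inr (.inl a))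

theorem carrollMap_P (a : Fin D) :
    carrollMap hindep hspan A (P a) = A 0 1 • B a + A 1 1 • P a :=
  carrollMap_kinFam hindep hspan A (.inr (.inr (.inl a)))

theorem carrollMap_H : carrollMap hindep hspan A H = A.det • H :=
  carrollMap_kinFam hindep hspan A (.inr (.inr (.inr ())))

theorem carrollMap_J (hc : CarrollBrackets J B P H) (a b : Fin D) :
    carrollMap hindep hspan A (J a b) = J a b := by
  rcases lt_trichotomy a b with h | rfl | h
  · exact carrollMap_J_of_lt hindep hspan A h
  · rw [hc.J_self, map_zero]
  · rw [hc.J_skew, map_neg, carrollMap_J_of_lt hindep hspan A h]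

theorem carrollMap_smul_add_smul (a : Fin D) (x y : ℝ) :
    carrollMap hindep hspan A (x • B a + y • P a) =
      (A *ᵥ ![x, y]) 0 • B a + (A *ᵥ ![x, y]) 1 • P a := by
  simp only [map_add, map_smul, carrollMap_B, carrollMap_P, mulVec, dotProduct,
    Fin.sum_univ_two, cons_val_zero, cons_val_one, cons_val_fin_one]
  module

theorem carrollMap_mul (A' : Matrix (Fin 2) (Fin 2) ℝ) :
    carrollMap hindep hspan A ∘ₗ carrollMap hindep hspan A' =
      carrollMap hindep hspan (A * A') := by
  refine (Module.Basis.mk hindep hspan.ge).ext fun i => ?_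
  rcases i with ⟨⟨a, b⟩, hab⟩ | a | a | -
  · simp only [Module.Basis.mk_apply, LinearMap.comp_apply, kinFam, Sum.elim_inl,
      carrollMap_J_of_lt hindep hspan _ hab]
  all_goals
    simp only [Module.Basis.mk_apply, LinearMap.comp_apply, kinFam, Sum.elim_inl, Sum.elim_inr,
      map_add, map_smul, carrollMap_B, carrollMap_P, carrollMap_H, det_mul, mul_apply,
      Fin.sum_univ_two]
    module

theorem carrollMap_one : carrollMap hindep hspan 1 = LinearMap.id := by
  refine (Module.Basis.mk hindep hspan.ge).ext fun i => ?_
  rcases i with ⟨⟨a, b⟩, hab⟩ | a | a | -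
  · simp [kinFam, carrollMap_J_of_lt hindep hspan _ hab]
  all_goals simp [kinFam, carrollMap_B, carrollMap_P, carrollMap_H]

theorem carrollMap_lie (hc : CarrollBrackets J B P H) (x y : L) :
    ⁅carrollMap hindep hspan A x, carrollMap hindep hspan A y⁆ =
      carrollMap hindep hspan A ⁅x, y⁆ := by
  refine map_lie_of_basis (Module.Basis.mk hindep hspan.ge) _ (fun i j => ?_) x y
  -- The `← lie_skew` rules put every bracket of generators in the order of `CarrollBrackets`.
  rcases i with ⟨⟨a, b⟩, -⟩ | a | a | - <;>
    rcases j with ⟨⟨c, d⟩, -⟩ | c | c | - <;>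
    simp only [Module.Basis.mk_apply, kinFam, Sum.elim_inl, Sum.elim_inr,
      carrollMap_J hindep hspan A hc, carrollMap_B, carrollMap_P, carrollMap_H,
      hc.lie_J_J, hc.lie_J_B, hc.lie_J_P, hc.lie_J_H, hc.lie_H_B, hc.lie_H_P,
      hc.lie_B_B, hc.lie_P_P, hc.lie_B_P,
      ← lie_skew (B _) (J _ _), ← lie_skew (P _) (J _ _), ← lie_skew H (J _ _),
      ← lie_skew (P _) (B _), ← lie_skew (B _) H, ← lie_skew (P _) H, lie_self,
      det_fin_two, kron_comm, lie_smul, smul_lie, lie_add, add_lie,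
      map_add, map_sub, map_neg, map_smul, map_zero, smul_zero]
  all_goals module

noncomputable def carrollEquiv (hc : CarrollBrackets J B P H) (A : GL (Fin 2) ℝ) :
    L ≃ₗ⁅ℝ⁆ L :=
  { carrollMap hindep hspan A with
    map_lie' := fun {x y} => (carrollMap_lie hindep hspan A hc x y).symm
    invFun := carrollMap hindep hspan ↑A⁻¹
    left_inv := fun x => by
      change (carrollMap hindep hspan ↑A⁻¹ ∘ₗ carrollMap hindep hspan ↑A) x = x
      rw [carrollMap_mul, Units.inv_mul, carrollMap_one, LinearMap.id_apply]
    right_inv := fun x => by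
      change (carrollMap hindep hspan ↑A ∘ₗ carrollMap hindep hspan ↑A⁻¹) x = x
      rw [carrollMap_mul, Units.mul_inv, carrollMap_one, LinearMap.id_apply] }

theorem map_carrollMap_adm (hc : CarrollBrackets J B P H) (α β : ℝ) :
    (adm J B P α β).map (carrollMap hindep hspan A) =
      adm J B P ((A *ᵥ ![α, β]) 0) ((A *ᵥ ![α, β]) 1) := by
  simp only [adm, Submodule.map_span, Set.image_union, ← Set.range_comp, Function.comp_def,
    carrollMap_J hindep hspan A hc, carrollMap_smul_add_smul]

end Action

theorem exists_lieEquiv_map_adm_eq {J : Fin D → Fin D → L} {B P : Fin D → L} {H : L}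
    (hindep : LinearIndependent ℝ (kinFam J B P H))
    (hspan : Submodule.span ℝ (Set.range (kinFam J B P H)) = ⊤)
    (hc : CarrollBrackets J B P H) {α β : ℝ} (hαβ : ¬(α = 0 ∧ β = 0)) :
    ∃ φ : L ≃ₗ⁅ℝ⁆ L,
      (adm J B P α β).map φ.toLinearEquiv.toLinearMap = adm J B P 1 0 := by
  have hdet : (!![α, -β; β, α] : Matrix (Fin 2) (Fin 2) ℝ).det ≠ 0 := by
    rw [det_fin_two_of, neg_mul, sub_neg_eq_add]
    contrapose! hαβ
    exact ⟨by nlinarith, by nlinarith⟩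
  let M : GL (Fin 2) ℝ := .mkOfDetNeZero !![α, -β; β, α] hdet
  have hM : (M : Matrix (Fin 2) (Fin 2) ℝ) *ᵥ ![1, 0] = ![α, β] := by
    ext i
    fin_cases i <;> simp [M, mulVec]
  have hM_inv : (↑M⁻¹ : Matrix (Fin 2) (Fin 2) ℝ) *ᵥ ![α, β] = ![1, 0] := by
    rw [← hM, mulVec_mulVec, Units.inv_mul, one_mulVec]
  refine ⟨carrollEquiv hindep hspan hc M⁻¹, ?_⟩
  exact (map_carrollMap_adm hindep hspan _ hc α β).trans (by rw [hM_inv]; rfl)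

end Stmt18

open Stmt18 in
theorem stmt18_general {D : ℕ} {L : Type*} [LieRing L] [LieAlgebra ℝ L]
    (J : Fin D → Fin D → L) (B P : Fin D → L) (H : L)
    (hJskew : ∀ a b, J a b = -J b a)
    (hindep : LinearIndependent ℝ (kinFam J B P H))
    (hspan : Submodule.span ℝ (Set.range (kinFam J B P H)) = ⊤)
    (hJJ : ∀ a b c d, ⁅J a b, J c d⁆ =
        kron b c • J a d - kron a c • J b d - kron b d • J a c + kron a d • J b c)
    (hJB : ∀ a b c, ⁅J a b, B c⁆ = kron b c • B a - kron a c • B b)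
    (hJP : ∀ a b c, ⁅J a b, P c⁆ = kron b c • P a - kron a c • P b)
    (hJH : ∀ a b, ⁅J a b, H⁆ = 0)
    (hHB : ∀ a, ⁅H, B a⁆ = 0)
    (hHP : ∀ a, ⁅H, P a⁆ = 0)
    (hBB : ∀ a b, ⁅B a, B b⁆ = 0)
    (hPP : ∀ a b, ⁅P a, P b⁆ = 0)
    (hBP : ∀ a b, ⁅B a, P b⁆ = kron a b • H) :
    ∀ α β : ℝ, ¬(α = 0 ∧ β = 0) →
      (∀ X ∈ adm J B P α β, ∀ Y ∈ adm J B P α β, ⁅X, Y⁆ ∈ adm J B P α β) ∧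
      ∃ φ : L ≃ₗ⁅ℝ⁆ L,
        Submodule.map φ.toLinearEquiv.toLinearMap (adm J B P α β) = adm J B P 1 0 := by
  intro α β hαβ
  have hc : CarrollBrackets J B P H :=
    ⟨hJskew, hJJ, hJB, hJP, hJH, hHB, hHP, hBB, hPP, hBP⟩
  exact ⟨fun X hX Y hY => hc.lie_mem_adm α β hX hY,
    exists_lieEquiv_map_adm_eq hindep hspan hc hαβ⟩

open Stmt18 in
/-- Let `c` be the Carroll algebra (`D ≥ 3`), with basis `{J_{ab}, B_a, P_a, H}` and nonzero
brackets `[J,J]`, `[J,B]`, `[J,P]` as usual and `[B_a,P_b] = δ_{ab}H`.  Then (i) every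
`h_{α,β} = span{J_{ab}} ⊕ span{αB_a + βP_a}` (with `(α,β) ≠ (0,0)`) is a Lie subalgebra of
`c`, and (ii) for every such `(α,β)` there is a Lie algebra automorphism `φ` of `c` with
`φ(h_{α,β}) = h_{1,0} = span{J_{ab}, B_a}`.  Consequently, up to automorphism the Carroll
algebra admits a unique admissible subalgebra, hence a unique associated homogeneous
spacetime (the carrollian spacetime). -/
theorem stmt18 {D : ℕ} (hD : 3 ≤ D) {L : Type*} [LieRing L] [LieAlgebra ℝ L]
    (J : Fin D → Fin D → L) (B P : Fin D → L) (H : L)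
    (hJskew : ∀ a b, J a b = -J b a)
    (hindep : LinearIndependent ℝ (kinFam J B P H))
    (hspan : Submodule.span ℝ (Set.range (kinFam J B P H)) = ⊤)
    (hJJ : ∀ a b c d, ⁅J a b, J c d⁆ =
        kron b c • J a d - kron a c • J b d - kron b d • J a c + kron a d • J b c)
    (hJB : ∀ a b c, ⁅J a b, B c⁆ = kron b c • B a - kron a c • B b)
    (hJP : ∀ a b c, ⁅J a b, P c⁆ = kron b c • P a - kron a c • P b)
    (hJH : ∀ a b, ⁅J a b, H⁆ = 0)
    (hHB : ∀ a, ⁅H, B a⁆ = 0)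
    (hHP : ∀ a, ⁅H, P a⁆ = 0)
    (hBB : ∀ a b, ⁅B a, B b⁆ = 0)
    (hPP : ∀ a b, ⁅P a, P b⁆ = 0)
    (hBP : ∀ a b, ⁅B a, P b⁆ = kron a b • H) :
    ∀ α β : ℝ, ¬(α = 0 ∧ β = 0) →
      (∀ X ∈ adm J B P α β, ∀ Y ∈ adm J B P α β, ⁅X, Y⁆ ∈ adm J B P α β) ∧
      ∃ φ : L ≃ₗ⁅ℝ⁆ L,
        Submodule.map φ.toLinearEquiv.toLinearMap (adm J B P α β) = adm J B P 1 0 :=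
  stmt18_general J B P H hJskew hindep hspan hJJ hJB hJP hJH hHB hHP hBB hPP hBP
end
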